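/- arXiv:2011.04075 — 15 statements merged into one kernel-verified Lean document; each statement's English description precedes it below -/
import Mathlib

section
/- Let p be a prime and G a t.d.l.c. group. Then G is locally elliptic if and only if for every compact subset K ⊆ G there exists a compactly supported continuous function f : G → ℚ_p with ‖f‖_∞ = 1 such that ‖g·f − f‖_∞ < 1 for all g ∈ K, where (g·f)(x) = f(g⁻¹x). Moreover, in that case f can even be chosen so that g·f = f for all g ∈ K. -/
/-!
If `K` lies in a compact subgroup `H`, the indicator of the compact open set `H * W`
(for any compact open `W`, which exists by total disconnectedness) is `H`-invariant.
Conversely, given `f` with `‖f‖_∞ = 1` attained at `x₀`, the elements `g` with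
`‖g • f - f‖_∞ < 1` form a subgroup by the ultrametric inequality; each such `g` satisfies
`f (g⁻¹ * x₀) ≠ 0`, so the subgroup lies in the compact set `x₀ * (tsupport f)⁻¹`, and its
closure is a compact subgroup containing `K`.
-/

open Set Pointwise

/-- A topological group is locally elliptic if every compact subset is contained in a
compact subgroup. -/
def IsLocallyElliptic (G : Type*) [Group G] [TopologicalSpace G] : Prop :=
  ∀ K : Set G, IsCompact K → ∃ H : Subgroup G, IsCompact (H : Set G) ∧ K ⊆ (H : Set G)

lemma exists_isCompact_isOpen_mem {X : Type*} [TopologicalSpace X] [LocallyCompactSpace X]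
    [T2Space X] [TotallyDisconnectedSpace X] (x : X) :
    ∃ W : Set X, IsCompact W ∧ IsOpen W ∧ x ∈ W := by
  obtain ⟨C, hC, hxC⟩ := exists_compact_mem_nhds x
  obtain ⟨W, hW, hxW, hWC⟩ := loc_compact_Haus_tot_disc_of_zero_dim.mem_nhds_iff.mp hxC
  exact ⟨W, hC.of_isClosed_subset hW.isClosed hWC, hW.isOpen, hxW⟩

lemma Subgroup.inv_mul_mem_coe_mul_iff {G : Type*} [Group G] (H : Subgroup G) (W : Set G)
    {g : G} (hg : g ∈ H) (x : G) : g⁻¹ * x ∈ (H : Set G) * W ↔ x ∈ (H : Set G) * W := by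
  change g⁻¹ • x ∈ _ ↔ _
  rw [← mem_smul_set_iff_inv_smul_mem, ← smul_mul_assoc, smul_coe_set hg]

lemma iSup_norm_indicator_one {X E : Type*} [SeminormedRing E] [NormOneClass E] {s : Set X}
    (hs : s.Nonempty) : ⨆ x, ‖s.indicator (1 : X → E) x‖ = 1 := by
  obtain ⟨x₀, hx₀⟩ := hs
  have : Nonempty X := ⟨x₀⟩
  have hle (x : X) : ‖s.indicator (1 : X → E) x‖ ≤ 1 := by
    by_cases hx : x ∈ s <;> simp [hx]
  exact ciSup_eq_of_forall_le_of_forall_lt_exists_gt hle fun w hw ↦ ⟨x₀, by simpa [hx₀] using hw⟩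

lemma Subgroup.exists_invariant_function_of_isCompact {G : Type*} [Group G] [TopologicalSpace G]
    [IsTopologicalGroup G] [LocallyCompactSpace G] [T2Space G] [TotallyDisconnectedSpace G]
    (E : Type*) [SeminormedRing E] [NormOneClass E]
    {H : Subgroup G} (hH : IsCompact (H : Set G)) :
    ∃ f : G → E, Continuous f ∧ HasCompactSupport f ∧
      (⨆ x : G, ‖f x‖) = 1 ∧ ∀ g ∈ H, ∀ x : G, f (g⁻¹ * x) = f x := by
  obtain ⟨W, hWc, hWo, h1W⟩ := exists_isCompact_isOpen_mem (1 : G)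
  set C := (H : Set G) * W
  have hC : IsClopen C := ⟨(hH.mul hWc).isClosed, hWo.mul_left⟩
  refine ⟨C.indicator 1, hC.continuous_indicator continuous_const,
    HasCompactSupport.intro (hH.mul hWc) fun x hx ↦ indicator_of_notMem hx _,
    iSup_norm_indicator_one ⟨1, 1, H.one_mem, 1, h1W, one_mul 1⟩, fun g hg x ↦ ?_⟩
  classical
  simp only [C, indicator_apply, Pi.one_apply, H.inv_mul_mem_coe_mul_iff W hg x]

section

variable {G E : Type*} [Group G] [SeminormedAddCommGroup E] [IsUltrametricDist E]

def almostInvariantSubgroup (f : G → E) : Subgroup G where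
  carrier := {g | ∀ x, ‖f (g⁻¹ * x) - f x‖ < 1}
  one_mem' x := by simp
  mul_mem' {a b} ha hb x := by
    rw [mul_inv_rev, mul_assoc, ← sub_add_sub_cancel _ (f (a⁻¹ * x))]
    exact (IsUltrametricDist.norm_add_le_max _ _).trans_lt (max_lt (hb _) (ha x))
  inv_mem' {a} ha x := by
    simpa only [inv_inv, inv_mul_cancel_left, norm_sub_rev] using ha (a * x)

lemma mem_almostInvariantSubgroup {f : G → E} {g : G} :
    g ∈ almostInvariantSubgroup f ↔ ∀ x, ‖f (g⁻¹ * x) - f x‖ < 1 :=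
  Iff.rfl

lemma almostInvariantSubgroup_subset_image_tsupport [TopologicalSpace G] {f : G → E} {x₀ : G}
    (hx₀ : 1 ≤ ‖f x₀‖) :
    (almostInvariantSubgroup f : Set G) ⊆ (fun s ↦ x₀ * s⁻¹) '' tsupport f := by
  intro g hg
  rw [SetLike.mem_coe, mem_almostInvariantSubgroup] at hg
  have hne : f (g⁻¹ * x₀) ≠ 0 := fun h0 ↦ by
    simpa [h0] using (hg x₀).trans_le hx₀
  exact ⟨g⁻¹ * x₀, subset_tsupport f hne, by group⟩

lemma isCompact_topologicalClosure_almostInvariantSubgroup [TopologicalSpace G]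
    [IsTopologicalGroup G] {f : G → E} (hf : HasCompactSupport f) {x₀ : G} (hx₀ : 1 ≤ ‖f x₀‖) :
    IsCompact ((almostInvariantSubgroup f).topologicalClosure : Set G) :=
  (hf.image (continuous_const.mul continuous_inv)).closure_of_subset
    (almostInvariantSubgroup_subset_image_tsupport hx₀)

end

lemma isLocallyElliptic_of_forall_exists_almostInvariant {G E : Type*} [Group G]
    [TopologicalSpace G] [IsTopologicalGroup G] [NormedAddCommGroup E] [IsUltrametricDist E]
    (h : ∀ K : Set G, IsCompact K → ∃ f : G → E, Continuous f ∧ HasCompactSupport f ∧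
      (⨆ x : G, ‖f x‖) = 1 ∧ ∀ g ∈ K, (⨆ x : G, ‖f (g⁻¹ * x) - f x‖) < 1) :
    IsLocallyElliptic G := by
  intro K hK
  obtain ⟨f, hfc, hfs, hsup, hK1⟩ := h K hK
  obtain ⟨x₀, hx₀⟩ := hfc.norm.exists_forall_ge_of_hasCompactSupport hfs.norm
  have hnorm : ‖f x₀‖ = 1 := by
    rw [← hsup]
    exact (ciSup_eq_of_forall_le_of_forall_lt_exists_gt hx₀ fun _ hw ↦ ⟨x₀, hw⟩).symm
  refine ⟨_, isCompact_topologicalClosure_almostInvariantSubgroup hfs hnorm.ge,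
    fun g hg ↦ Subgroup.le_topologicalClosure _ (mem_almostInvariantSubgroup.2 fun x ↦ ?_)⟩
  have hbdd : BddAbove (range fun x ↦ ‖f (g⁻¹ * x) - f x‖) := by
    refine ⟨1, forall_mem_range.2 fun x ↦ ?_⟩
    rw [sub_eq_add_neg]
    refine (IsUltrametricDist.norm_add_le_max _ _).trans (max_le ?_ ?_) <;>
      simpa only [norm_neg, hnorm] using hx₀ _
  exact (le_ciSup hbdd x).trans_lt (hK1 g hg)

/-- A t.d.l.c. group `G` is locally elliptic iff it satisfies Reiter's
property with threshold `1` over `ℚ_p`; moreover in that case the almost-invariant function can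
be chosen genuinely invariant under the given compact set. -/
theorem locallyElliptic_iff_reiter (p : ℕ) [Fact p.Prime]
    (G : Type*) [Group G] [TopologicalSpace G] [IsTopologicalGroup G]
    [LocallyCompactSpace G] [TotallyDisconnectedSpace G] [T2Space G] :
    (IsLocallyElliptic G ↔
      ∀ K : Set G, IsCompact K → ∃ f : G → ℚ_[p], Continuous f ∧ HasCompactSupport f ∧
        (⨆ x : G, ‖f x‖) = 1 ∧ ∀ g ∈ K, (⨆ x : G, ‖f (g⁻¹ * x) - f x‖) < 1) ∧
    (IsLocallyElliptic G →
      ∀ K : Set G, IsCompact K → ∃ f : G → ℚ_[p], Continuous f ∧ HasCompactSupport f ∧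
        (⨆ x : G, ‖f x‖) = 1 ∧ ∀ g ∈ K, ∀ x : G, f (g⁻¹ * x) = f x) := by
  have invariant (hLE : IsLocallyElliptic G) (K : Set G) (hK : IsCompact K) :
      ∃ f : G → ℚ_[p], Continuous f ∧ HasCompactSupport f ∧
        (⨆ x : G, ‖f x‖) = 1 ∧ ∀ g ∈ K, ∀ x : G, f (g⁻¹ * x) = f x := by
    obtain ⟨H, hH, hKH⟩ := hLE K hK
    obtain ⟨f, hfc, hfs, hsup, hf⟩ := Subgroup.exists_invariant_function_of_isCompact ℚ_[p] hH
    exact ⟨f, hfc, hfs, hsup, fun g hg ↦ hf g (hKH hg)⟩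
  refine ⟨⟨fun hLE K hK ↦ ?_, isLocallyElliptic_of_forall_exists_almostInvariant⟩, invariant⟩
  obtain ⟨f, hfc, hfs, hsup, hf⟩ := invariant hLE K hK
  exact ⟨f, hfc, hfs, hsup, fun g hg ↦ by simp [hf g hg]⟩
end

section
/- Let 𝕂 be a field equipped with a non-Archimedean absolute value and let G be a finite group of order n, with the discrete topology. If the image (n : 𝕂) of n in 𝕂 is nonzero (equivalently, char 𝕂 does not divide n), then the map m₀ : C_b(G,𝕂) → 𝕂 defined by m₀(f) = (n : 𝕂)⁻¹ · Σ_{g ∈ G} f(g) is the unique left-invariant normed 𝕂-mean on G, and its operator norm equals ‖(n : 𝕂)‖⁻¹. If the image of n in 𝕂 is zero, then G admits no left-invariant normed 𝕂-mean. -/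
/-!
Summing the `n` left translates of `f` gives the constant function `∑ g, f g`, so any
left-invariant normed mean `m` satisfies `n * m f = ∑ g, f g`. If `n = 0` in `𝕂`, the indicator
function of `1` gives `0 = 1`; otherwise `m` is forced to be the average, which is indeed an
invariant mean. The ultrametric inequality gives `‖∑ g, f g‖ ≤ ‖f‖`, so the average has norm
at most `‖n‖⁻¹`, and the indicator function of `1` attains this bound.
-/

open BoundedContinuousFunction

/-- The left translate of a bounded continuous function: `(leftTranslate 𝕂 g f) x = f (g⁻¹ * x)`. -/
noncomputable def leftTranslate {G : Type*} [Group G] [TopologicalSpace G] [IsTopologicalGroup G]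
    (𝕂 : Type*) [NormedField 𝕂] (g : G) (f : G →ᵇ 𝕂) : G →ᵇ 𝕂 :=
  f.compContinuous ⟨fun x => g⁻¹ * x, continuous_mul_left g⁻¹⟩

/-- `m` is a left-invariant normed `𝕂`-mean on `G`: a bounded (equivalently, continuous)
linear functional on the space of bounded continuous `𝕂`-valued functions on `G`, sending the
constant function `𝟙_G` to `1`, and invariant under left translation. -/
def IsInvariantMean (𝕂 : Type*) [NormedField 𝕂] (G : Type*) [Group G] [TopologicalSpace G]
    [IsTopologicalGroup G] (m : (G →ᵇ 𝕂) →ₗ[𝕂] 𝕂) : Prop :=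
  (∃ C : ℝ, ∀ f : G →ᵇ 𝕂, ‖m f‖ ≤ C * ‖f‖) ∧
    m (BoundedContinuousFunction.const G (1 : 𝕂)) = 1 ∧
    ∀ (g : G) (f : G →ᵇ 𝕂), m (leftTranslate 𝕂 g f) = m f

/-- The operator norm of the linear functional `m` is at most `C`. -/
def MeanNormLE (𝕂 : Type*) [NormedField 𝕂] (G : Type*) [Group G] [TopologicalSpace G]
    [IsTopologicalGroup G] (m : (G →ᵇ 𝕂) →ₗ[𝕂] 𝕂) (C : ℝ) : Prop :=
  ∀ f : G →ᵇ 𝕂, ‖m f‖ ≤ C * ‖f‖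

namespace BoundedContinuousFunction

section Ultrametric

variable {α E : Type*} [TopologicalSpace α] [Fintype α] [SeminormedAddCommGroup E]
  [IsUltrametricDist E]

theorem norm_sum_apply_le (f : α →ᵇ E) : ‖∑ x, f x‖ ≤ ‖f‖ :=
  IsUltrametricDist.norm_sum_le_of_forall_le_of_nonneg (norm_nonneg f)
    fun x _ => f.norm_coe_le_norm x

end Ultrametric

section Single

variable {α E : Type*} [TopologicalSpace α] [DiscreteTopology α] [Finite α] [DecidableEq α]
  [SeminormedAddCommGroup E]

def single (a : α) (c : E) : α →ᵇ E :=
  mkOfCompact ⟨Pi.single a c, continuous_of_discreteTopology⟩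

@[simp]
theorem single_apply (a : α) (c : E) (x : α) : single a c x = (Pi.single a c : α → E) x := rfl

theorem sum_single_apply [Fintype α] (a : α) (c : E) : ∑ x, single a c x = c := by
  simp

theorem norm_single (a : α) (c : E) : ‖single a c‖ = ‖c‖ := by
  refine le_antisymm ((norm_le (norm_nonneg c)).mpr fun x => ?_) ?_
  · by_cases hx : x = a
    · subst hx; simp
    · simp [hx]
  · simpa using (single a c).norm_coe_le_norm a

end Single

end BoundedContinuousFunction

section Translation

variable {𝕂 G : Type*} [NormedField 𝕂] [Group G] [TopologicalSpace G] [IsTopologicalGroup G]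

@[simp]
theorem leftTranslate_apply (g : G) (f : G →ᵇ 𝕂) (x : G) :
    leftTranslate 𝕂 g f x = f (g⁻¹ * x) := rfl

variable [Fintype G]

theorem sum_leftTranslate_apply (g : G) (f : G →ᵇ 𝕂) :
    ∑ x, leftTranslate 𝕂 g f x = ∑ x, f x :=
  Equiv.sum_comp (Equiv.mulLeft g⁻¹) f

theorem sum_leftTranslate (f : G →ᵇ 𝕂) :
    ∑ g, leftTranslate 𝕂 g f = const G (∑ g, f g) := by
  ext x
  simpa using ((Equiv.inv G).trans (Equiv.mulRight x)).sum_comp f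

end Translation

noncomputable def average (𝕂 G : Type*) [NormedField 𝕂] [Fintype G] [TopologicalSpace G] :
    (G →ᵇ 𝕂) →ₗ[𝕂] 𝕂 where
  toFun f := (Fintype.card G : 𝕂)⁻¹ * ∑ g, f g
  map_add' f f' := by simp [Finset.sum_add_distrib, mul_add]
  map_smul' c f := by simp [Finset.mul_sum, mul_left_comm]

theorem average_apply {𝕂 G : Type*} [NormedField 𝕂] [Fintype G] [TopologicalSpace G]
    (f : G →ᵇ 𝕂) : average 𝕂 G f = (Fintype.card G : 𝕂)⁻¹ * ∑ g, f g := rfl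

section Average

variable {𝕂 G : Type*} [NormedField 𝕂] [Group G] [Fintype G] [TopologicalSpace G]
  [IsTopologicalGroup G]

theorem meanNormLE_average [IsUltrametricDist 𝕂] :
    MeanNormLE 𝕂 G (average 𝕂 G) ‖(Fintype.card G : 𝕂)‖⁻¹ := fun f => by
  rw [average_apply, norm_mul, norm_inv]
  exact mul_le_mul_of_nonneg_left (norm_sum_apply_le f) (by positivity)

theorem isInvariantMean_average [IsUltrametricDist 𝕂] (hG : (Fintype.card G : 𝕂) ≠ 0) :
    IsInvariantMean 𝕂 G (average 𝕂 G) := by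
  refine ⟨⟨_, meanNormLE_average⟩, ?_, fun g f => ?_⟩
  · simp [average_apply, hG]
  · rw [average_apply, average_apply, sum_leftTranslate_apply]

theorem le_of_meanNormLE_average [DiscreteTopology G] {C : ℝ}
    (hC : MeanNormLE 𝕂 G (average 𝕂 G) C) : ‖(Fintype.card G : 𝕂)‖⁻¹ ≤ C := by
  classical
  simpa [average_apply, sum_single_apply, norm_single] using hC (single 1 1)

end Average

namespace IsInvariantMean

variable {𝕂 G : Type*} [NormedField 𝕂] [Group G] [Fintype G] [TopologicalSpace G]
  [IsTopologicalGroup G] {m : (G →ᵇ 𝕂) →ₗ[𝕂] 𝕂}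

theorem natCast_card_mul_apply (hm : IsInvariantMean 𝕂 G m) (f : G →ᵇ 𝕂) :
    (Fintype.card G : 𝕂) * m f = ∑ g, f g := by
  obtain ⟨-, hm_one, hm_inv⟩ := hm
  have hconst : const G (∑ g, f g) = (∑ g, f g) • const G (1 : 𝕂) := by
    ext x; simp
  calc (Fintype.card G : 𝕂) * m f = ∑ g : G, m (leftTranslate 𝕂 g f) := by
        simp [hm_inv]
    _ = ∑ g, f g := by
        rw [← map_sum, sum_leftTranslate, hconst, map_smul, hm_one, smul_eq_mul, mul_one]

theorem eq_average (hm : IsInvariantMean 𝕂 G m) (hG : (Fintype.card G : 𝕂) ≠ 0) :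
    m = average 𝕂 G :=
  LinearMap.ext fun f => by
    rw [average_apply, ← hm.natCast_card_mul_apply f, inv_mul_cancel_left₀ hG]

theorem natCast_card_ne_zero [DiscreteTopology G] (hm : IsInvariantMean 𝕂 G m) :
    (Fintype.card G : 𝕂) ≠ 0 := by
  classical
  have h := hm.natCast_card_mul_apply (single 1 1)
  rw [sum_single_apply] at h
  exact left_ne_zero_of_mul_eq_one h

end IsInvariantMean

/-- For a finite (discrete) group `G` of order `n` and a non-Archimedean
valued field `𝕂`: if `(n : 𝕂) ≠ 0` then the averaging functional is the unique left-invariant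
normed `𝕂`-mean on `G` and its operator norm equals `‖(n : 𝕂)‖⁻¹`; if `(n : 𝕂) = 0` then `G`
admits no left-invariant normed `𝕂`-mean. -/
theorem invariantMean_of_finite_group (𝕂 : Type*) [NormedField 𝕂] [IsUltrametricDist 𝕂]
    (G : Type*) [Group G] [Fintype G] [TopologicalSpace G] [DiscreteTopology G]
    [IsTopologicalGroup G] :
    (((Fintype.card G : 𝕂) ≠ 0) →
      ∃ m : (G →ᵇ 𝕂) →ₗ[𝕂] 𝕂, IsInvariantMean 𝕂 G m ∧
        (∀ f : G →ᵇ 𝕂, m f = (Fintype.card G : 𝕂)⁻¹ * ∑ g : G, f g) ∧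
        MeanNormLE 𝕂 G m (‖(Fintype.card G : 𝕂)‖⁻¹) ∧
        (∀ C : ℝ, MeanNormLE 𝕂 G m C → ‖(Fintype.card G : 𝕂)‖⁻¹ ≤ C) ∧
        (∀ m' : (G →ᵇ 𝕂) →ₗ[𝕂] 𝕂, IsInvariantMean 𝕂 G m' → m' = m)) ∧
    (((Fintype.card G : 𝕂) = 0) →
      ¬ ∃ m : (G →ᵇ 𝕂) →ₗ[𝕂] 𝕂, IsInvariantMean 𝕂 G m) :=
  ⟨fun hG => ⟨average 𝕂 G, isInvariantMean_average hG, average_apply, meanNormLE_average,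
      fun _ => le_of_meanNormLE_average, fun _ hm => hm.eq_average hG⟩,
    fun hG ⟨_, hm⟩ => hm.natCast_card_ne_zero hG⟩
end

section
/- Let 𝕂 be a field equipped with a non-Archimedean absolute value, let G and Q be t.d.l.c. groups, let φ : G → Q be a continuous surjective group homomorphism, and let M ≥ 0. If G admits a left-invariant normed 𝕂-mean of operator norm ≤ M, then Q admits a left-invariant normed 𝕂-mean of operator norm ≤ M. In particular this applies to Q = G/H for a closed normal subgroup H of G, and ‖Q‖_𝕂 ≤ ‖G‖_𝕂. -/
/- The mean on `Q` is the pullback `f ↦ m (f ∘ φ)`: precomposition with `φ` does not increase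
the sup norm and preserves constants, and surjectivity of `φ` makes every translation of `Q` the
image of one of `G`, since `(f ∘ φ) (g⁻¹ x) = f ((φ g)⁻¹ (φ x))`. -/

open BoundedContinuousFunction

section Pullback

variable {𝕂 : Type*} [NormedField 𝕂]
  {G : Type*} [Group G] [TopologicalSpace G] [IsTopologicalGroup G]
  {Q : Type*} [Group Q] [TopologicalSpace Q] [IsTopologicalGroup Q]

theorem BoundedContinuousFunction.const_compContinuous {α β : Type*} [TopologicalSpace α]
    [TopologicalSpace β] (c : 𝕂) (ψ : C(α, β)) : (const β c).compContinuous ψ = const α c :=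
  rfl

theorem leftTranslate_compContinuous (φ : G →* Q) (hφ : Continuous φ) (g : G) (f : Q →ᵇ 𝕂) :
    (leftTranslate 𝕂 (φ g) f).compContinuous ⟨φ, hφ⟩ =
      leftTranslate 𝕂 g (f.compContinuous ⟨φ, hφ⟩) := by
  ext x
  simp [leftTranslate]

theorem MeanNormLE.comp_compContinuous {m : (G →ᵇ 𝕂) →ₗ[𝕂] 𝕂} {M : ℝ}
    (hm : MeanNormLE 𝕂 G m M) (hM : 0 ≤ M) (ψ : C(G, Q)) :
    MeanNormLE 𝕂 Q (m ∘ₗ (compContinuousCLM 𝕂 𝕂 ψ).toLinearMap) M := fun f =>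
  (hm _).trans (mul_le_mul_of_nonneg_left (norm_compContinuous_le f ψ) hM)

theorem IsInvariantMean.comp_compContinuous {m : (G →ᵇ 𝕂) →ₗ[𝕂] 𝕂}
    (hm : IsInvariantMean 𝕂 G m) (φ : G →* Q) (hφc : Continuous φ)
    (hφs : Function.Surjective φ) :
    IsInvariantMean 𝕂 Q (m ∘ₗ (compContinuousCLM 𝕂 𝕂 ⟨φ, hφc⟩).toLinearMap) := by
  obtain ⟨⟨C, hC⟩, hone, hinv⟩ := hm
  have hbound : MeanNormLE 𝕂 G m (max C 0) := fun f =>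
    (hC f).trans (mul_le_mul_of_nonneg_right (le_max_left C 0) (norm_nonneg f))
  refine ⟨⟨max C 0, hbound.comp_compContinuous (le_max_right C 0) _⟩, ?_, ?_⟩
  · simpa [const_compContinuous] using hone
  · intro q f
    obtain ⟨g, rfl⟩ := hφs q
    simp only [LinearMap.comp_apply, ContinuousLinearMap.coe_coe, compContinuousCLM_apply,
      leftTranslate_compContinuous, hinv]

end Pullback

theorem invariantMean_of_surjective_general (𝕂 : Type*) [NormedField 𝕂]
    (G : Type*) [Group G] [TopologicalSpace G] [IsTopologicalGroup G]
    (Q : Type*) [Group Q] [TopologicalSpace Q] [IsTopologicalGroup Q]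
    (φ : G →* Q) (hφc : Continuous φ) (hφs : Function.Surjective φ)
    (M : ℝ) (hM : 0 ≤ M)
    (h : ∃ m : (G →ᵇ 𝕂) →ₗ[𝕂] 𝕂, IsInvariantMean 𝕂 G m ∧ MeanNormLE 𝕂 G m M) :
    ∃ m' : (Q →ᵇ 𝕂) →ₗ[𝕂] 𝕂, IsInvariantMean 𝕂 Q m' ∧ MeanNormLE 𝕂 Q m' M := by
  obtain ⟨m, hmean, hnorm⟩ := h
  exact ⟨_, hmean.comp_compContinuous φ hφc hφs, hnorm.comp_compContinuous hM ⟨φ, hφc⟩⟩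

/-- If `φ : G → Q` is a continuous surjective homomorphism of t.d.l.c. groups
and `G` admits a left-invariant normed `𝕂`-mean of operator norm `≤ M`, then so does `Q`. -/
theorem invariantMean_of_surjective (𝕂 : Type*) [NormedField 𝕂] [IsUltrametricDist 𝕂]
    (G : Type*) [Group G] [TopologicalSpace G] [IsTopologicalGroup G]
    [LocallyCompactSpace G] [TotallyDisconnectedSpace G] [T2Space G]
    (Q : Type*) [Group Q] [TopologicalSpace Q] [IsTopologicalGroup Q]
    [LocallyCompactSpace Q] [TotallyDisconnectedSpace Q] [T2Space Q]
    (φ : G →* Q) (hφc : Continuous φ) (hφs : Function.Surjective φ)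
    (M : ℝ) (hM : 0 ≤ M)
    (h : ∃ m : (G →ᵇ 𝕂) →ₗ[𝕂] 𝕂, IsInvariantMean 𝕂 G m ∧ MeanNormLE 𝕂 G m M) :
    ∃ m' : (Q →ᵇ 𝕂) →ₗ[𝕂] 𝕂, IsInvariantMean 𝕂 Q m' ∧ MeanNormLE 𝕂 Q m' M :=
  invariantMean_of_surjective_general 𝕂 G Q φ hφc hφs M hM h
end

section
/- Let 𝕂 be a field equipped with a non-Archimedean absolute value, let G be a t.d.l.c. group, let H be an open subgroup of G (with the subspace topology), and let M ≥ 0. If G admits a left-invariant normed 𝕂-mean of operator norm ≤ M, then H admits a left-invariant normed 𝕂-mean of operator norm ≤ M; hence ‖H‖_𝕂 ≤ ‖G‖_𝕂. -/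
/-!
Choose a representative `t(x)` of each right coset `H x`. Since `H` is open, the cosets are open,
so `x ↦ t(x)` is locally constant and `x ↦ x t(x)⁻¹ ∈ H` is a continuous map `G → H` commuting
with left multiplication by `H`. Precomposing with it carries bounded continuous functions on `H`
to bounded continuous functions on `G` without increasing norms, so it pulls an invariant mean
on `G` back to one on `H` of no larger norm.
-/

open BoundedContinuousFunction

namespace Subgroup

variable {G : Type*} [Group G] (H : Subgroup G)

noncomputable def rightCosetRep (x : G) : G := (Quotient.mk (QuotientGroup.rightRel H) x).out

theorem rightCosetRep_eq_of_mul_inv_mem {x y : G} (h : y * x⁻¹ ∈ H) :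
    rightCosetRep H y = rightCosetRep H x := by
  rw [rightCosetRep, rightCosetRep,
    Quotient.sound ((QuotientGroup.rightRel_apply (s := H)).2 h)]

theorem mul_inv_rightCosetRep_mem (x : G) : x * (rightCosetRep H x)⁻¹ ∈ H :=
  (QuotientGroup.rightRel_apply (s := H)).1 (Quotient.mk_out x)

noncomputable def rightCosetFactor (x : G) : H :=
  ⟨x * (rightCosetRep H x)⁻¹, mul_inv_rightCosetRep_mem H x⟩

theorem rightCosetFactor_mul (h : H) (x : G) :
    rightCosetFactor H (h * x) = h * rightCosetFactor H x := by
  have hrep : rightCosetRep H (h * x) = rightCosetRep H x :=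
    rightCosetRep_eq_of_mul_inv_mem H (by simp [mul_assoc])
  ext
  simp [rightCosetFactor, hrep, mul_assoc]

variable [TopologicalSpace G] [IsTopologicalGroup G]

theorem isLocallyConstant_rightCosetRep (hH : IsOpen (H : Set G)) :
    IsLocallyConstant (rightCosetRep H) :=
  (IsLocallyConstant.iff_exists_open _).2 fun x =>
    ⟨{y | y * x⁻¹ ∈ H}, hH.preimage (continuous_mul_const x⁻¹), by simp,
      fun _ hy => rightCosetRep_eq_of_mul_inv_mem H hy⟩

theorem continuous_rightCosetFactor (hH : IsOpen (H : Set G)) :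
    Continuous (rightCosetFactor H) :=
  continuous_induced_rng.2 <|
    continuous_id.mul (isLocallyConstant_rightCosetRep H hH).continuous.inv

end Subgroup

section Pullback

variable {𝕂 : Type*} [NormedField 𝕂] {G K : Type*} [Group G] [TopologicalSpace G]
  [IsTopologicalGroup G] [Group K] [TopologicalSpace K] [IsTopologicalGroup K]
  {m : (G →ᵇ 𝕂) →ₗ[𝕂] 𝕂}

theorem one_le_of_meanNormLE (hm : m (const G 1) = 1) {C : ℝ} (hC : MeanNormLE 𝕂 G m C) :
    1 ≤ C := by
  simpa [hm, norm_const_eq] using hC (const G 1)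

theorem MeanNormLE.comp_compContinuousCLM {C : ℝ} (hC : MeanNormLE 𝕂 G m C) (hC₀ : 0 ≤ C)
    (c : C(G, K)) : MeanNormLE 𝕂 K (m ∘ₗ (compContinuousCLM 𝕂 𝕂 c).toLinearMap) C :=
  fun f => (hC _).trans (mul_le_mul_of_nonneg_left (f.norm_compContinuous_le c) hC₀)

theorem IsInvariantMean.comp_compContinuousCLM (hm : IsInvariantMean 𝕂 G m) (φ : K →* G)
    (c : C(G, K)) (hc : ∀ k x, c (φ k * x) = k * c x) :
    IsInvariantMean 𝕂 K (m ∘ₗ (compContinuousCLM 𝕂 𝕂 c).toLinearMap) := by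
  obtain ⟨⟨C, hC⟩, hone, hinv⟩ := hm
  have hC₀ : 0 ≤ C := zero_le_one.trans (one_le_of_meanNormLE hone hC)
  refine ⟨⟨C, MeanNormLE.comp_compContinuousCLM hC hC₀ c⟩, hone, fun k f => ?_⟩
  have htranslate : (leftTranslate 𝕂 k f).compContinuous c
      = leftTranslate 𝕂 (φ k) (f.compContinuous c) := by
    ext x
    simp [leftTranslate, ← map_inv, hc]
  simpa [htranslate] using hinv (φ k) (f.compContinuous c)

end Pullback

theorem invariantMean_of_openSubgroup_general (𝕂 : Type*) [NormedField 𝕂]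
    (G : Type*) [Group G] [TopologicalSpace G] [IsTopologicalGroup G]
    (H : Subgroup G) (hH : IsOpen (H : Set G))
    (M : ℝ)
    (h : ∃ m : (G →ᵇ 𝕂) →ₗ[𝕂] 𝕂, IsInvariantMean 𝕂 G m ∧ MeanNormLE 𝕂 G m M) :
    ∃ m' : (↥H →ᵇ 𝕂) →ₗ[𝕂] 𝕂, IsInvariantMean 𝕂 ↥H m' ∧ MeanNormLE 𝕂 ↥H m' M := by
  obtain ⟨m, hm, hmM⟩ := h
  let c : C(G, H) := ⟨H.rightCosetFactor, H.continuous_rightCosetFactor hH⟩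
  have hM : 0 ≤ M := zero_le_one.trans (one_le_of_meanNormLE hm.2.1 hmM)
  exact ⟨_, hm.comp_compContinuousCLM H.subtype c H.rightCosetFactor_mul,
    hmM.comp_compContinuousCLM hM c⟩

/-- If `H` is an open subgroup of a t.d.l.c. group `G` and `G` admits a
left-invariant normed `𝕂`-mean of operator norm `≤ M`, then so does `H`. -/
theorem invariantMean_of_openSubgroup (𝕂 : Type*) [NormedField 𝕂] [IsUltrametricDist 𝕂]
    (G : Type*) [Group G] [TopologicalSpace G] [IsTopologicalGroup G]
    [LocallyCompactSpace G] [TotallyDisconnectedSpace G] [T2Space G]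
    (H : Subgroup G) (hH : IsOpen (H : Set G))
    (M : ℝ) (hM : 0 ≤ M)
    (h : ∃ m : (G →ᵇ 𝕂) →ₗ[𝕂] 𝕂, IsInvariantMean 𝕂 G m ∧ MeanNormLE 𝕂 G m M) :
    ∃ m' : (↥H →ᵇ 𝕂) →ₗ[𝕂] 𝕂, IsInvariantMean 𝕂 ↥H m' ∧ MeanNormLE 𝕂 ↥H m' M :=
  invariantMean_of_openSubgroup_general 𝕂 G H hH M h
end

section
/- Let 𝕂 be a field equipped with a non-Archimedean absolute value, let G be a t.d.l.c. group, let H be an open normal subgroup of G, and let Q = G/H be the (discrete) quotient group. If H admits a left-invariant normed 𝕂-mean of operator norm ≤ a and Q admits a left-invariant normed 𝕂-mean of operator norm ≤ b, then G admits a left-invariant normed 𝕂-mean of operator norm ≤ a·b; hence ‖G‖_𝕂 ≤ ‖H‖_𝕂 · ‖G/H‖_𝕂. -/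
open BoundedContinuousFunction

/-- Restriction of a bounded continuous function on `G` to the coset `g • H`, viewed as a
bounded continuous function on `H`. -/
noncomputable def cosetRestrict {G : Type*} [Group G] [TopologicalSpace G] [IsTopologicalGroup G]
    (𝕂 : Type*) [NormedField 𝕂] (H : Subgroup G) (g : G) (f : G →ᵇ 𝕂) : ↥H →ᵇ 𝕂 :=
  f.compContinuous ⟨fun h => g * (h : G), by fun_prop⟩

/-- If `H` is an open normal subgroup of a t.d.l.c. group `G`, `H` admits a
left-invariant normed `𝕂`-mean of operator norm `≤ a` and `G/H` admits one of operator norm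
`≤ b`, then `G` admits one of operator norm `≤ a * b`. -/
theorem invariantMean_of_extension (𝕂 : Type*) [NormedField 𝕂] [IsUltrametricDist 𝕂]
    (G : Type*) [Group G] [TopologicalSpace G] [IsTopologicalGroup G]
    [LocallyCompactSpace G] [TotallyDisconnectedSpace G] [T2Space G]
    (H : Subgroup G) [H.Normal] (hH : IsOpen (H : Set G)) (a b : ℝ)
    (hHm : ∃ m : (↥H →ᵇ 𝕂) →ₗ[𝕂] 𝕂, IsInvariantMean 𝕂 ↥H m ∧ MeanNormLE 𝕂 ↥H m a)
    (hQm : ∃ m : ((G ⧸ H) →ᵇ 𝕂) →ₗ[𝕂] 𝕂, IsInvariantMean 𝕂 (G ⧸ H) m ∧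
      MeanNormLE 𝕂 (G ⧸ H) m b) :
    ∃ m : (G →ᵇ 𝕂) →ₗ[𝕂] 𝕂, IsInvariantMean 𝕂 G m ∧ MeanNormLE 𝕂 G m (a * b) := by
  classical
  haveI : DiscreteTopology (G ⧸ H) := QuotientGroup.discreteTopology hH
  obtain ⟨mH, ⟨_, hH1, hHinv⟩, hHa⟩ := hHm
  obtain ⟨mQ, ⟨_, hQ1, hQinv⟩, hQb⟩ := hQm
  -- a and b are at least 1
  have hnormconstH : ‖(BoundedContinuousFunction.const ↥H (1 : 𝕂))‖ = 1 := by
    rw [BoundedContinuousFunction.norm_const_eq]; exact norm_one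
  have hnormconstQ : ‖(BoundedContinuousFunction.const (G ⧸ H) (1 : 𝕂))‖ = 1 := by
    rw [BoundedContinuousFunction.norm_const_eq]; exact norm_one
  have ha : (1 : ℝ) ≤ a := by
    have := hHa (BoundedContinuousFunction.const ↥H (1 : 𝕂))
    rw [hH1, hnormconstH, norm_one, mul_one] at this
    exact this
  have hb : (1 : ℝ) ≤ b := by
    have := hQb (BoundedContinuousFunction.const (G ⧸ H) (1 : 𝕂))
    rw [hQ1, hnormconstQ, norm_one, mul_one] at this
    exact this
  have ha0 : (0 : ℝ) ≤ a := le_trans zero_le_one ha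
  have hb0 : (0 : ℝ) ≤ b := le_trans zero_le_one hb
  -- key: the value of mH on coset restrictions only depends on the coset
  have key : ∀ (f : G →ᵇ 𝕂) (g : G) (h : ↥H),
      mH (cosetRestrict 𝕂 H (g * (h : G)) f) = mH (cosetRestrict 𝕂 H g f) := by
    intro f g h
    have : cosetRestrict 𝕂 H (g * (h : G)) f = leftTranslate 𝕂 h⁻¹ (cosetRestrict 𝕂 H g f) := by
      ext x
      simp [cosetRestrict, leftTranslate, mul_assoc]
    rw [this, hHinv]
  -- the averaged function on the quotient
  set Fraw : (G →ᵇ 𝕂) → (G ⧸ H) → 𝕂 := fun f q =>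
    Quotient.liftOn' q (fun g => mH (cosetRestrict 𝕂 H g f)) (by
      intro x y hxy
      have hxy' : x⁻¹ * y ∈ H := (QuotientGroup.leftRel_apply).mp hxy
      have : y = x * ((⟨x⁻¹ * y, hxy'⟩ : ↥H) : G) := by
        simp
      rw [this, key]) with hFraw
  have Fraw_mk : ∀ (f : G →ᵇ 𝕂) (g : G),
      Fraw f (QuotientGroup.mk g) = mH (cosetRestrict 𝕂 H g f) := fun f g => rfl
  have Fraw_bound : ∀ (f : G →ᵇ 𝕂) (q : G ⧸ H), ‖Fraw f q‖ ≤ a * ‖f‖ := by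
    intro f q
    induction q using Quotient.inductionOn' with
    | h g =>
      have h1 : ‖mH (cosetRestrict 𝕂 H g f)‖ ≤ a * ‖cosetRestrict 𝕂 H g f‖ := hHa _
      have h2 : ‖cosetRestrict 𝕂 H g f‖ ≤ ‖f‖ :=
        BoundedContinuousFunction.norm_compContinuous_le f _
      exact le_trans h1 (by nlinarith)
  set Fb : (G →ᵇ 𝕂) → ((G ⧸ H) →ᵇ 𝕂) := fun f =>
    BoundedContinuousFunction.ofNormedAddCommGroup (Fraw f)
      continuous_of_discreteTopology (a * ‖f‖) (Fraw_bound f) with hFb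
  have Fb_apply : ∀ (f : G →ᵇ 𝕂) (q : G ⧸ H), Fb f q = Fraw f q := fun f q => rfl
  -- the candidate mean
  refine ⟨{ toFun := fun f => mQ (Fb f)
            map_add' := ?_
            map_smul' := ?_ }, ⟨⟨a * b, ?_⟩, ?_, ?_⟩, ?_⟩
  · intro f₁ f₂
    have : Fb (f₁ + f₂) = Fb f₁ + Fb f₂ := by
      ext q
      induction q using Quotient.inductionOn' with
      | h g =>
        have : cosetRestrict 𝕂 H g (f₁ + f₂) =
            cosetRestrict 𝕂 H g f₁ + cosetRestrict 𝕂 H g f₂ := by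
          ext x; simp [cosetRestrict]
        simp only [BoundedContinuousFunction.coe_add, Pi.add_apply]
        rw [Fb_apply, Fb_apply, Fb_apply, Fraw_mk, Fraw_mk, Fraw_mk, this, map_add]
    show mQ (Fb (f₁ + f₂)) = mQ (Fb f₁) + mQ (Fb f₂)
    rw [this, map_add]
  · intro c f
    have : Fb (c • f) = c • Fb f := by
      ext q
      induction q using Quotient.inductionOn' with
      | h g =>
        have : cosetRestrict 𝕂 H g (c • f) = c • cosetRestrict 𝕂 H g f := by
          ext x; simp [cosetRestrict]
        simp only [BoundedContinuousFunction.coe_smul, Pi.smul_apply]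
        rw [Fb_apply, Fb_apply, Fraw_mk, Fraw_mk, this, map_smul]
    show mQ (Fb (c • f)) = (RingHom.id 𝕂) c • mQ (Fb f)
    rw [this, map_smul]
    rfl
  · -- boundedness (existential)
    intro f
    have h1 : ‖mQ (Fb f)‖ ≤ b * ‖Fb f‖ := hQb _
    have h2 : ‖Fb f‖ ≤ a * ‖f‖ :=
      BoundedContinuousFunction.norm_le (by positivity) |>.mpr (Fraw_bound f)
    calc ‖mQ (Fb f)‖ ≤ b * ‖Fb f‖ := h1
      _ ≤ b * (a * ‖f‖) := by nlinarith [norm_nonneg (Fb f)]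
      _ = a * b * ‖f‖ := by ring
  · -- normalization
    have : Fb (BoundedContinuousFunction.const G (1 : 𝕂)) =
        BoundedContinuousFunction.const (G ⧸ H) (1 : 𝕂) := by
      ext q
      induction q using Quotient.inductionOn' with
      | h g =>
        have : cosetRestrict 𝕂 H g (BoundedContinuousFunction.const G (1 : 𝕂)) =
            BoundedContinuousFunction.const ↥H (1 : 𝕂) := by
          ext x; simp [cosetRestrict]
        show Fraw _ (QuotientGroup.mk g) = _
        rw [Fraw_mk, this, hH1]
        simp
    show mQ (Fb _) = 1
    rw [this, hQ1]
  · -- invariance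
    intro g₀ f
    have : Fb (leftTranslate 𝕂 g₀ f) =
        leftTranslate 𝕂 (QuotientGroup.mk g₀ : G ⧸ H) (Fb f) := by
      ext q
      induction q using Quotient.inductionOn' with
      | h g =>
        have h1 : cosetRestrict 𝕂 H g (leftTranslate 𝕂 g₀ f) =
            cosetRestrict 𝕂 H (g₀⁻¹ * g) f := by
          ext x; simp [cosetRestrict, leftTranslate, mul_assoc]
        have h2 : (QuotientGroup.mk g₀ : G ⧸ H)⁻¹ * QuotientGroup.mk g =
            QuotientGroup.mk (g₀⁻¹ * g) := by
          simp [QuotientGroup.mk_mul, QuotientGroup.mk_inv]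
        show Fraw _ (QuotientGroup.mk g) = Fb f ((QuotientGroup.mk g₀ : G ⧸ H)⁻¹ * QuotientGroup.mk g)
        rw [Fraw_mk, h1, h2, Fb_apply, Fraw_mk]
    show mQ (Fb _) = mQ (Fb f)
    rw [this, hQinv]
  · -- norm bound
    intro f
    have h1 : ‖mQ (Fb f)‖ ≤ b * ‖Fb f‖ := hQb _
    have h2 : ‖Fb f‖ ≤ a * ‖f‖ :=
      BoundedContinuousFunction.norm_le (by positivity) |>.mpr (Fraw_bound f)
    calc ‖mQ (Fb f)‖ ≤ b * ‖Fb f‖ := h1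
      _ ≤ b * (a * ‖f‖) := by nlinarith [norm_nonneg (Fb f)]
      _ = a * b * ‖f‖ := by ring
end

section
/- Let 𝕂 be a field equipped with a non-Archimedean absolute value whose closed unit ball is compact (for example a non-Archimedean local field such as ℚ_p). Let G be a t.d.l.c. group which is the union of a family (G_i)_{i∈I} of closed subgroups that is directed under inclusion, and let M ≥ 0. If every G_i admits a left-invariant normed 𝕂-mean of operator norm ≤ M, then G admits a left-invariant normed 𝕂-mean of operator norm ≤ M; hence ‖G‖_𝕂 ≤ sup_{i∈I} ‖G_i‖_𝕂. -/
open BoundedContinuousFunction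

/-! Restrict a function on `G` to each `Gi i` and apply the mean of `Gi i`. Along an ultrafilter
on `I` that eventually contains every `{j | Gi i ≤ Gi j}`, these values stay in a ball of `𝕂`,
which is compact, so they converge; the limit is linear and bounded by `M`. It is invariant under
`g ∈ G` because `g ∈ Gi j` for ultrafilter-almost every `j`, and there the `j`-th functional is
already invariant under `g`. -/

open Filter Topology

lemma isCompact_closedBall_of_isCompact_closedBall_one {𝕂 : Type*} [NormedField 𝕂]
    (hball : IsCompact (Metric.closedBall (0 : 𝕂) 1)) (r : ℝ) :
    IsCompact (Metric.closedBall (0 : 𝕂) r) := by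
  by_cases hlarge : ∃ c : 𝕂, 1 < ‖c‖
  · obtain ⟨c, hc⟩ := hlarge
    obtain ⟨n, hn⟩ := pow_unbounded_of_one_lt r hc
    have hcn : 0 < ‖c ^ n‖ := by rw [norm_pow]; exact pow_pos (one_pos.trans hc) n
    refine (hball.image (continuous_const_mul (c ^ n))).of_isClosed_subset
      Metric.isClosed_closedBall fun x hx => ⟨(c ^ n)⁻¹ * x, ?_, ?_⟩
    · rw [mem_closedBall_zero_iff] at hx ⊢
      rw [norm_mul, norm_inv, inv_mul_le_iff₀ hcn, mul_one, norm_pow]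
      exact hx.trans hn.le
    · exact mul_inv_cancel_left₀ (norm_pos_iff.mp hcn) x
  · push Not at hlarge
    exact hball.of_isClosed_subset Metric.isClosed_closedBall fun x _ =>
      mem_closedBall_zero_iff.mpr (hlarge x)

lemma Ultrafilter.exists_tendsto_of_norm_le {𝕂 ι : Type*} [NormedField 𝕂]
    (hball : IsCompact (Metric.closedBall (0 : 𝕂) 1)) (U : Ultrafilter ι) {u : ι → 𝕂} {r : ℝ}
    (hu : ∀ i, ‖u i‖ ≤ r) : ∃ x, Tendsto u U (𝓝 x) := by
  obtain ⟨x, -, hx⟩ :=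
    (isCompact_closedBall_of_isCompact_closedBall_one hball r).ultrafilter_le_nhds (U.map u)
      (le_principal_iff.mpr <| mem_map.mpr <| univ_mem' fun i => mem_closedBall_zero_iff.mpr (hu i))
  exact ⟨x, hx⟩

lemma Ultrafilter.exists_linearMap_tendsto {𝕂 E ι : Type*} [NormedField 𝕂]
    [SeminormedAddCommGroup E] [Module 𝕂 E]
    (hball : IsCompact (Metric.closedBall (0 : 𝕂) 1)) (U : Ultrafilter ι)
    (φ : ι → E →ₗ[𝕂] 𝕂) {M : ℝ} (hφ : ∀ i f, ‖φ i f‖ ≤ M * ‖f‖) :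
    ∃ m : E →ₗ[𝕂] 𝕂, (∀ f, ‖m f‖ ≤ M * ‖f‖) ∧ ∀ f, Tendsto (φ · f) U (𝓝 (m f)) := by
  choose L hL using fun f => U.exists_tendsto_of_norm_le hball (hφ · f)
  let m := linearMapOfTendsto L φ (tendsto_pi_nhds.mpr hL)
  refine ⟨m, fun f => ?_, hL⟩
  exact mem_closedBall_zero_iff.mp <| Metric.isClosed_closedBall.mem_of_tendsto (hL f) <|
    Eventually.of_forall fun i => mem_closedBall_zero_iff.mpr (hφ i f)

lemma Directed.exists_ultrafilter_eventually_le {ι α : Type*} [Preorder α] [Nonempty ι]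
    {f : ι → α} (hf : Directed (· ≤ ·) f) :
    ∃ U : Ultrafilter ι, ∀ i, ∀ᶠ j in (U : Filter ι), f i ≤ f j := by
  have hdir : Directed (· ≥ ·) fun i => 𝓟 {j | f i ≤ f j} := fun i i' =>
    let ⟨k, hik, hi'k⟩ := hf i i'
    ⟨k, principal_mono.mpr fun _ => hik.trans, principal_mono.mpr fun _ => hi'k.trans⟩
  have : NeBot (⨅ i, 𝓟 {j | f i ≤ f j}) :=
    iInf_neBot_of_directed' hdir fun i => principal_neBot_iff.mpr ⟨i, le_rfl⟩
  obtain ⟨U, hU⟩ := Ultrafilter.exists_le (⨅ i, 𝓟 {j | f i ≤ f j})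
  exact ⟨U, fun i => hU (mem_iInf_of_mem i (mem_principal_self _))⟩

section Restriction

variable {𝕂 : Type*} [NormedField 𝕂] {G : Type*} [Group G] [TopologicalSpace G]

variable (𝕂) in
noncomputable def restrictSubgroup (H : Subgroup G) : (G →ᵇ 𝕂) →ₗ[𝕂] (H →ᵇ 𝕂) :=
  (compContinuousCLM 𝕂 𝕂 ⟨((↑) : H → G), continuous_subtype_val⟩).toLinearMap

lemma norm_restrictSubgroup_le (H : Subgroup G) (f : G →ᵇ 𝕂) :
    ‖restrictSubgroup 𝕂 H f‖ ≤ ‖f‖ :=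
  norm_compContinuous_le f _

lemma restrictSubgroup_const (H : Subgroup G) (c : 𝕂) :
    restrictSubgroup 𝕂 H (const G c) = const H c :=
  rfl

lemma restrictSubgroup_leftTranslate [IsTopologicalGroup G] {H : Subgroup G} {g : G} (hg : g ∈ H)
    (f : G →ᵇ 𝕂) :
    restrictSubgroup 𝕂 H (leftTranslate 𝕂 g f) =
      leftTranslate 𝕂 ⟨g, hg⟩ (restrictSubgroup 𝕂 H f) :=
  rfl

lemma one_le_of_meanNormLE_s6 [IsTopologicalGroup G] {m : (G →ᵇ 𝕂) →ₗ[𝕂] 𝕂}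
    (hm : IsInvariantMean 𝕂 G m) {M : ℝ} (hM : MeanNormLE 𝕂 G m M) : 1 ≤ M := by
  simpa [hm.2.1] using hM (const G 1)

end Restriction

theorem invariantMean_of_directedUnion_general (𝕂 : Type*) [NormedField 𝕂]
    (hball : IsCompact (Metric.closedBall (0 : 𝕂) 1))
    (G : Type*) [Group G] [TopologicalSpace G] [IsTopologicalGroup G]
    (I : Type*) (Gi : I → Subgroup G)
    (hdir : Directed (· ≤ ·) Gi)
    (hcover : ∀ g : G, ∃ i, g ∈ Gi i)
    (M : ℝ)
    (h : ∀ i, ∃ m : (↥(Gi i) →ᵇ 𝕂) →ₗ[𝕂] 𝕂,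
      IsInvariantMean 𝕂 ↥(Gi i) m ∧ MeanNormLE 𝕂 ↥(Gi i) m M) :
    ∃ m : (G →ᵇ 𝕂) →ₗ[𝕂] 𝕂, IsInvariantMean 𝕂 G m ∧ MeanNormLE 𝕂 G m M := by
  choose mi hmi hMi using h
  obtain ⟨i₁, -⟩ := hcover 1
  have : Nonempty I := ⟨i₁⟩
  have hM : 0 ≤ M := zero_le_one.trans (one_le_of_meanNormLE_s6 (hmi i₁) (hMi i₁))
  obtain ⟨U, hU⟩ := hdir.exists_ultrafilter_eventually_le
  obtain ⟨m, hmM, hm⟩ := U.exists_linearMap_tendsto hball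
    (fun i => (mi i).comp (restrictSubgroup 𝕂 (Gi i))) fun i f =>
      (hMi i _).trans (mul_le_mul_of_nonneg_left (norm_restrictSubgroup_le _ f) hM)
  refine ⟨m, ⟨⟨M, hmM⟩, ?_, fun g f => ?_⟩, hmM⟩
  · refine tendsto_nhds_unique (hm _) ?_
    simp only [LinearMap.comp_apply, restrictSubgroup_const, (hmi _).2.1, tendsto_const_nhds]
  · obtain ⟨i, hi⟩ := hcover g
    refine tendsto_nhds_unique (hm _) ((hm f).congr' ?_)
    filter_upwards [hU i] with j hij
    simp only [LinearMap.comp_apply, restrictSubgroup_leftTranslate (hij hi), (hmi j).2.2]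

/-- Over a non-Archimedean valued field with compact closed unit ball, if a
t.d.l.c. group `G` is the directed union of closed subgroups each admitting a left-invariant
normed `𝕂`-mean of operator norm `≤ M`, then so does `G`. -/
theorem invariantMean_of_directedUnion (𝕂 : Type*) [NormedField 𝕂] [IsUltrametricDist 𝕂]
    (hball : IsCompact (Metric.closedBall (0 : 𝕂) 1))
    (G : Type*) [Group G] [TopologicalSpace G] [IsTopologicalGroup G]
    [LocallyCompactSpace G] [TotallyDisconnectedSpace G] [T2Space G]
    (I : Type*) (Gi : I → Subgroup G)
    (hclosed : ∀ i, IsClosed (Gi i : Set G))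
    (hdir : Directed (· ≤ ·) Gi)
    (hcover : ∀ g : G, ∃ i, g ∈ Gi i)
    (M : ℝ)
    (h : ∀ i, ∃ m : (↥(Gi i) →ᵇ 𝕂) →ₗ[𝕂] 𝕂,
      IsInvariantMean 𝕂 ↥(Gi i) m ∧ MeanNormLE 𝕂 ↥(Gi i) m M) :
    ∃ m : (G →ᵇ 𝕂) →ₗ[𝕂] 𝕂, IsInvariantMean 𝕂 G m ∧ MeanNormLE 𝕂 G m M :=
  invariantMean_of_directedUnion_general 𝕂 hball G I Gi hdir hcover M h
end

section
/- Let p be a prime, G a t.d.l.c. group, and k ≥ 1 an integer. If G admits a left-invariant normed ℚ_p-mean of operator norm < p^k, then G is p^k-free. In particular, every normed p-adic amenable group is p^ℕ-free, and ‖G‖_p ≥ min{p^j : j ≥ 0 and G is p^{j+1}-free}. -/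
/-!
If `V ≤ U` are open subgroups with `[U : V] = n`, a choice of representatives of the right
cosets of `U` gives a clopen set `S ⊆ G` whose left translates by representatives of `U ⧸ V`
partition `G`. Applying a left-invariant mean `m` to the sum of their indicators gives
`n • m 𝟙_S = 1`, so `‖m‖ ≥ |m 𝟙_S|_p = |n|_p⁻¹`, which is at least `p ^ k` as soon as
`p ^ k ∣ n`.
-/

open BoundedContinuousFunction

/-- `G` is `m`-free: for every pair of open subgroups `V ≤ U` of `G` with finite index
`[U : V]`, `m` does not divide `[U : V]`. -/
def IsFreeOf (G : Type*) [Group G] [TopologicalSpace G] (m : ℕ) : Prop :=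
  ∀ U V : Subgroup G, IsOpen (U : Set G) → IsOpen (V : Set G) → V ≤ U →
    V.relIndex U ≠ 0 → ¬ m ∣ V.relIndex U

section CosetCoordinate

variable {G : Type*} [Group G] [TopologicalSpace G] [IsTopologicalGroup G] {U V : Subgroup G}

/-- The witness is `x ↦ x (r x)⁻¹ V`, where `r` picks a representative of each right coset
`U x`. -/
lemma exists_isLocallyConstant_equivariant_quotient (hV : IsOpen (V : Set G)) (hVU : V ≤ U) :
    ∃ ψ : G → U ⧸ V.subgroupOf U,
      IsLocallyConstant ψ ∧ ∀ (u : U) (x : G), ψ (u * x) = u • ψ x := by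
  obtain ⟨T, hT, -⟩ := U.exists_isComplement_right 1
  let r : G → G := fun x => hT.toRightFun x
  have hr_mem (x : G) : x * (r x)⁻¹ ∈ U := hT.mul_inv_toRightFun_mem x
  have hr_mul {u : G} (hu : u ∈ U) (x : G) : r (u * x) = r x := by
    have : (Quotient.mk'' (u * x) : Quotient (QuotientGroup.rightRel U)) = Quotient.mk'' x :=
      Quotient.sound' (QuotientGroup.rightRel_apply.mpr (by simpa using U.inv_mem hu))
    simp only [r, Subgroup.IsComplement.toRightFun, Function.comp_apply, this]
  let ψ : G → U ⧸ V.subgroupOf U := fun x => QuotientGroup.mk ⟨x * (r x)⁻¹, hr_mem x⟩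
  refine ⟨ψ, ?_, fun u x => ?_⟩
  · refine (IsLocallyConstant.iff_exists_open ψ).mpr fun x => ?_
    refine ⟨{y | (x * (r x)⁻¹)⁻¹ * (y * (r x)⁻¹) ∈ V}, hV.preimage (by fun_prop),
      by simp [V.one_mem], fun y hy => ?_⟩
    have hyU : y * x⁻¹ ∈ U := by
      simpa [mul_assoc] using U.mul_mem (hr_mem x) (U.mul_mem (hVU hy) (U.inv_mem (hr_mem x)))
    have hry : r y = r x := by simpa using hr_mul hyU x
    simp only [ψ, hry, QuotientGroup.eq, Subgroup.mem_subgroupOf]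
    simpa [mul_assoc] using V.inv_mem hy
  · simp only [ψ, MulAction.Quotient.smul_mk, hr_mul u.2, smul_eq_mul]
    congr 1
    ext
    simp [mul_assoc]

end CosetCoordinate

section Translates

variable {G : Type*} [Group G] [TopologicalSpace G] [IsTopologicalGroup G] {U V : Subgroup G}
  (𝕂 : Type*) [NormedField 𝕂]

/-- `F` is the indicator of `ψ⁻¹ {V}` for an equivariant coordinate `ψ : G → U ⧸ V`; its
translates by coset representatives are the indicators of the fibres of `ψ`. -/
lemma exists_sum_leftTranslate_eq_one (hV : IsOpen (V : Set G)) (hVU : V ≤ U)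
    [Fintype (U ⧸ V.subgroupOf U)] :
    ∃ F : G →ᵇ 𝕂, ‖F‖ ≤ 1 ∧
      ∑ q : U ⧸ V.subgroupOf U, leftTranslate 𝕂 ((q.out : U) : G) F = const G 1 := by
  classical
  obtain ⟨ψ, hψ, hψ_mul⟩ := exists_isLocallyConstant_equivariant_quotient hV hVU
  let f : G → 𝕂 := fun x => if ψ x = QuotientGroup.mk 1 then 1 else 0
  have hf : Continuous f :=
    (hψ.comp fun q => if q = QuotientGroup.mk 1 then (1 : 𝕂) else 0).continuous
  have hf_le (x : G) : ‖f x‖ ≤ 1 := by unfold f; split_ifs <;> simp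
  refine ⟨.ofNormedAddCommGroup f hf 1 hf_le,
    norm_ofNormedAddCommGroup_le hf zero_le_one hf_le, ?_⟩
  ext x
  have hterm (q : U ⧸ V.subgroupOf U) :
      f (((q.out : U) : G)⁻¹ * x) = if ψ x = q then 1 else 0 := by
    simp only [f, ← Subgroup.coe_inv, hψ_mul, inv_smul_eq_iff, MulAction.Quotient.smul_mk,
      smul_eq_mul, mul_one, QuotientGroup.out_eq']
  simp [leftTranslate, hterm]

end Translates

namespace IsInvariantMean

variable {𝕂 : Type*} [NormedField 𝕂] {G : Type*} [Group G] [TopologicalSpace G]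
  [IsTopologicalGroup G] {m : (G →ᵇ 𝕂) →ₗ[𝕂] 𝕂}

lemma one_le_of_meanNormLE (hm : IsInvariantMean 𝕂 G m) {C : ℝ} (hC : MeanNormLE 𝕂 G m C) :
    1 ≤ C := by
  simpa [hm.2.1] using hC (const G 1)

lemma card_mul_eq_one (hm : IsInvariantMean 𝕂 G m) {ι : Type*} [Fintype ι] (g : ι → G)
    {F : G →ᵇ 𝕂} (hF : ∑ i, leftTranslate 𝕂 (g i) F = const G 1) :
    (Fintype.card ι : 𝕂) * m F = 1 := by
  calc (Fintype.card ι : 𝕂) * m F = ∑ i, m (leftTranslate 𝕂 (g i) F) := by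
        simp [hm.2.2, Finset.card_univ]
    _ = 1 := by rw [← map_sum, hF, hm.2.1]

lemma inv_norm_relIndex_le (hm : IsInvariantMean 𝕂 G m) {C : ℝ} (hC : MeanNormLE 𝕂 G m C)
    {U V : Subgroup G} (hV : IsOpen (V : Set G)) (hVU : V ≤ U) (hindex : V.relIndex U ≠ 0) :
    ‖(V.relIndex U : 𝕂)‖⁻¹ ≤ C := by
  have : Finite (U ⧸ V.subgroupOf U) := Nat.finite_of_card_ne_zero hindex
  let := Fintype.ofFinite (U ⧸ V.subgroupOf U)
  obtain ⟨F, hF_norm, hF_sum⟩ := exists_sum_leftTranslate_eq_one 𝕂 hV hVU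
  have hmF : m F = (V.relIndex U : 𝕂)⁻¹ := by
    refine eq_inv_of_mul_eq_one_right ?_
    simpa [Subgroup.relIndex, Subgroup.index, Nat.card_eq_fintype_card] using
      hm.card_mul_eq_one _ hF_sum
  calc ‖(V.relIndex U : 𝕂)‖⁻¹ = ‖m F‖ := by rw [hmF, norm_inv]
    _ ≤ C * ‖F‖ := hC F
    _ ≤ C := mul_le_of_le_one_right (by linarith [hm.one_le_of_meanNormLE hC]) hF_norm

end IsInvariantMean

lemma Padic.pow_le_inv_norm_natCast_of_dvd {p : ℕ} [Fact p.Prime] {k n : ℕ} (hn : n ≠ 0)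
    (hdvd : p ^ k ∣ n) : (p : ℝ) ^ k ≤ ‖(n : ℚ_[p])‖⁻¹ := by
  have hnorm : ‖(n : ℚ_[p])‖ ≤ (p : ℝ) ^ (-k : ℤ) := by
    exact_mod_cast (Padic.norm_int_le_pow_iff_dvd (n : ℤ) k).mpr (by exact_mod_cast hdvd)
  calc (p : ℝ) ^ k = ((p : ℝ) ^ (-k : ℤ))⁻¹ := by simp
    _ ≤ ‖(n : ℚ_[p])‖⁻¹ := inv_anti₀ (norm_pos_iff.mpr (by exact_mod_cast hn)) hnorm

section PPowFree

variable {p : ℕ} [Fact p.Prime] {G : Type*} [Group G] [TopologicalSpace G] [IsTopologicalGroup G]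
  {m : (G →ᵇ ℚ_[p]) →ₗ[ℚ_[p]] ℚ_[p]}

lemma isFreeOf_pow_of_meanNormLE (hm : IsInvariantMean ℚ_[p] G m) {C : ℝ}
    (hC : MeanNormLE ℚ_[p] G m C) {k : ℕ} (hCk : C < (p : ℝ) ^ k) : IsFreeOf G (p ^ k) :=
  fun _ _ _ hV hVU hindex hdvd => hCk.not_ge <|
    (Padic.pow_le_inv_norm_natCast_of_dvd hindex hdvd).trans
      (hm.inv_norm_relIndex_le hC hV hVU hindex)

lemma exists_isFreeOf_pow_succ (hm : IsInvariantMean ℚ_[p] G m) :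
    ∃ j : ℕ, IsFreeOf G (p ^ (j + 1)) := by
  obtain ⟨C, hC⟩ := hm.1
  have hp : (1 : ℝ) < p := by exact_mod_cast (Fact.out : p.Prime).one_lt
  obtain ⟨j, hj⟩ := pow_unbounded_of_one_lt C hp
  exact ⟨j, isFreeOf_pow_of_meanNormLE hm hC <|
    hj.trans_le (pow_le_pow_right₀ hp.le j.le_succ)⟩

end PPowFree

theorem pPowFree_of_small_mean_general (p : ℕ) [Fact p.Prime]
    (G : Type*) [Group G] [TopologicalSpace G] [IsTopologicalGroup G]
    (k : ℕ) :
    ((∃ m : (G →ᵇ ℚ_[p]) →ₗ[ℚ_[p]] ℚ_[p], IsInvariantMean ℚ_[p] G m ∧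
        (∃ C : ℝ, C < (p : ℝ) ^ k ∧ MeanNormLE ℚ_[p] G m C)) → IsFreeOf G (p ^ k)) ∧
    ((∃ m : (G →ᵇ ℚ_[p]) →ₗ[ℚ_[p]] ℚ_[p], IsInvariantMean ℚ_[p] G m) →
      ∃ j : ℕ, 1 ≤ j ∧ IsFreeOf G (p ^ j)) ∧
    ((∃ m : (G →ᵇ ℚ_[p]) →ₗ[ℚ_[p]] ℚ_[p], IsInvariantMean ℚ_[p] G m) →
      ∃ j : ℕ, IsFreeOf G (p ^ (j + 1)) ∧ (∀ i : ℕ, IsFreeOf G (p ^ (i + 1)) → j ≤ i) ∧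
        ∀ m : (G →ᵇ ℚ_[p]) →ₗ[ℚ_[p]] ℚ_[p], IsInvariantMean ℚ_[p] G m →
          ∀ C : ℝ, MeanNormLE ℚ_[p] G m C → (p : ℝ) ^ j ≤ C) := by
  refine ⟨fun ⟨m, hm, C, hCk, hC⟩ => isFreeOf_pow_of_meanNormLE hm hC hCk,
    fun ⟨m, hm⟩ => ?_, fun ⟨m, hm⟩ => ?_⟩
  · obtain ⟨j, hj⟩ := exists_isFreeOf_pow_succ hm
    exact ⟨j + 1, j.succ_pos, hj⟩
  · classical
    have hex := exists_isFreeOf_pow_succ hm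
    refine ⟨Nat.find hex, Nat.find_spec hex, fun i hi => Nat.find_min' hex hi,
      fun m' hm' C hC => ?_⟩
    rcases hj : Nat.find hex with _ | i
    · simpa using hm'.one_le_of_meanNormLE hC
    · by_contra! hlt
      have := Nat.find_min' hex (isFreeOf_pow_of_meanNormLE hm' hC hlt)
      omega

/-- For a prime `p`, a t.d.l.c. group `G` and `k ≥ 1`: if `G` admits a
left-invariant normed `ℚ_p`-mean of operator norm `< p^k` then `G` is `p^k`-free. In particular
every normed `p`-adic amenable group is `p^ℕ`-free, and `‖G‖_p ≥ min {p^j : G is p^(j+1)-free}`. -/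
theorem pPowFree_of_small_mean (p : ℕ) [Fact p.Prime]
    (G : Type*) [Group G] [TopologicalSpace G] [IsTopologicalGroup G]
    [LocallyCompactSpace G] [TotallyDisconnectedSpace G] [T2Space G]
    (k : ℕ) (hk : 1 ≤ k) :
    ((∃ m : (G →ᵇ ℚ_[p]) →ₗ[ℚ_[p]] ℚ_[p], IsInvariantMean ℚ_[p] G m ∧
        (∃ C : ℝ, C < (p : ℝ) ^ k ∧ MeanNormLE ℚ_[p] G m C)) → IsFreeOf G (p ^ k)) ∧
    ((∃ m : (G →ᵇ ℚ_[p]) →ₗ[ℚ_[p]] ℚ_[p], IsInvariantMean ℚ_[p] G m) →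
      ∃ j : ℕ, 1 ≤ j ∧ IsFreeOf G (p ^ j)) ∧
    ((∃ m : (G →ᵇ ℚ_[p]) →ₗ[ℚ_[p]] ℚ_[p], IsInvariantMean ℚ_[p] G m) →
      ∃ j : ℕ, IsFreeOf G (p ^ (j + 1)) ∧ (∀ i : ℕ, IsFreeOf G (p ^ (i + 1)) → j ≤ i) ∧
        ∀ m : (G →ᵇ ℚ_[p]) →ₗ[ℚ_[p]] ℚ_[p], IsInvariantMean ℚ_[p] G m →
          ∀ C : ℝ, MeanNormLE ℚ_[p] G m C → (p : ℝ) ^ j ≤ C) :=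
  pPowFree_of_small_mean_general p G k
end

section
/- Let G be a t.d.l.c. group and let H be a compact subgroup of G. Then there exists a compact open subgroup U of G with H ≤ U. -/
/-!
By van Dantzig's theorem `G` has a compact open subgroup `V`: the stabilizer, under left
translation, of a compact open neighbourhood `K` of `1` is open, and it lies in `K`. Since `H` is
compact, the intersection `W` of the conjugates `h⁻¹ V h`, `h ∈ H`, is still a neighbourhood of
`1` (tube lemma), hence a compact open subgroup normalized by `H`. Then `H ⊔ W = H * W` is compact
and open.
-/

open Set Filter Topology Pointwise

theorem stabilizer_subset_of_one_mem {G : Type*} [Group G] {K : Set G} (h1K : (1 : G) ∈ K) :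
    (MulAction.stabilizer G K : Set G) ⊆ K := fun g hg => by
  simpa [MulAction.mem_stabilizer_iff.1 hg] using smul_mem_smul_set (a := g) h1K

namespace Subgroup

variable {G : Type*} [Group G]

def conjCore (H V : Subgroup G) : Subgroup G :=
  ⨅ h : H, V.comap (MulAut.conj (h : G)).toMonoidHom

variable {H V : Subgroup G}

theorem mem_conjCore {x : G} : x ∈ H.conjCore V ↔ ∀ h ∈ H, h * x * h⁻¹ ∈ V := by
  simp [conjCore, mem_iInf]

theorem conjCore_le : H.conjCore V ≤ V := fun x hx => by
  simpa using mem_conjCore.1 hx 1 H.one_mem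

theorem le_normalizer_conjCore : H ≤ normalizer (H.conjCore V : Set G) := by
  intro h hh
  rw [mem_normalizer_iff]
  intro x
  simp only [mem_conjCore]
  refine ⟨fun hx k hk => ?_, fun hx k hk => ?_⟩
  · simpa [mul_assoc] using hx (k * h) (H.mul_mem hk hh)
  · simpa [mul_assoc] using hx (k * h⁻¹) (H.mul_mem hk (H.inv_mem hh))

end Subgroup

section Topological

variable {G : Type*} [Group G] [TopologicalSpace G] [IsTopologicalGroup G]

theorem isOpen_stabilizer_of_isCompact_of_isOpen {K : Set G} (hKc : IsCompact K)
    (hKo : IsOpen K) : IsOpen (MulAction.stabilizer G K : Set G) := by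
  obtain ⟨V, hV, hVK⟩ := compact_open_separated_mul_left hKc hKo subset_rfl
  have smul_subset : ∀ g ∈ V, g • K ⊆ K := by
    rintro g hg _ ⟨k, hk, rfl⟩
    exact hVK (mul_mem_mul hg hk)
  refine Subgroup.isOpen_of_mem_nhds _ (mem_of_superset (inter_mem hV (inv_mem_nhds_one G hV)) ?_)
  rintro g ⟨hg, hg'⟩
  exact (smul_subset g hg).antisymm (subset_smul_set_iff.2 (smul_subset g⁻¹ hg'))

theorem exists_isCompact_isOpen_subgroup_subset [LocallyCompactSpace G]
    [TotallyDisconnectedSpace G] [T2Space G] {U : Set G} (hU : U ∈ 𝓝 1) :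
    ∃ V : Subgroup G, IsCompact (V : Set G) ∧ IsOpen (V : Set G) ∧ (V : Set G) ⊆ U := by
  obtain ⟨K₀, hK₀, hK₀U, hK₀c⟩ := local_compact_nhds hU
  obtain ⟨K, hK, h1K, hKK₀⟩ := loc_compact_Haus_tot_disc_of_zero_dim.mem_nhds_iff.1 hK₀
  have hKc : IsCompact K := hK₀c.of_isClosed_subset hK.isClosed hKK₀
  have hVo := isOpen_stabilizer_of_isCompact_of_isOpen hKc hK.isOpen
  have hVK := stabilizer_subset_of_one_mem h1K
  exact ⟨_, hKc.of_isClosed_subset (Subgroup.isClosed_of_isOpen _ hVo) hVK, hVo,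
    hVK.trans (hKK₀.trans hK₀U)⟩

theorem eventually_forall_conj_mem_of_isCompact {K U : Set G} (hK : IsCompact K)
    (hU : U ∈ 𝓝 1) : ∀ᶠ x in 𝓝 1, ∀ g ∈ K, g * x * g⁻¹ ∈ U := by
  refine hK.eventually_forall_of_forall_eventually fun g _ => ?_
  have hconj : Continuous fun z : G × G => z.2 * z.1 * z.2⁻¹ := by fun_prop
  exact hconj.continuousAt.preimage_mem_nhds (by simpa using hU)

theorem Subgroup.isOpen_conjCore {H V : Subgroup G} (hH : IsCompact (H : Set G))
    (hV : IsOpen (V : Set G)) : IsOpen (H.conjCore V : Set G) :=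
  Subgroup.isOpen_of_mem_nhds _ <|
    (eventually_forall_conj_mem_of_isCompact hH (hV.mem_nhds V.one_mem)).mono
      fun _ hx => Subgroup.mem_conjCore.2 hx

end Topological

/-- In a t.d.l.c. group, every compact subgroup is contained in a compact open
subgroup. -/
theorem compact_subgroup_le_compact_open_subgroup
    (G : Type*) [Group G] [TopologicalSpace G] [IsTopologicalGroup G]
    [LocallyCompactSpace G] [TotallyDisconnectedSpace G] [T2Space G]
    (H : Subgroup G) (hH : IsCompact (H : Set G)) :
    ∃ U : Subgroup G, IsCompact (U : Set G) ∧ IsOpen (U : Set G) ∧ H ≤ U := by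
  obtain ⟨V, hVc, hVo, -⟩ := exists_isCompact_isOpen_subgroup_subset (G := G) univ_mem
  set W := H.conjCore V
  have hWo : IsOpen (W : Set G) := Subgroup.isOpen_conjCore hH hVo
  have hWc : IsCompact (W : Set G) :=
    hVc.of_isClosed_subset (W.isClosed_of_isOpen hWo) Subgroup.conjCore_le
  have hHW : ((H ⊔ W : Subgroup G) : Set G) = H * W :=
    Subgroup.coe_mul_of_left_le_normalizer_right H W Subgroup.le_normalizer_conjCore
  exact ⟨H ⊔ W, hHW ▸ hH.mul hWc, hHW ▸ hWo.mul_left, le_sup_left⟩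
end

section
/- Let G be a locally elliptic t.d.l.c. group, p a prime, and k ≥ 1. Suppose there exist open subgroups V ≤ U of G such that the index [U:V] is finite and divisible by p^k. Then there exist compact open subgroups V' ≤ U' of G such that [U':V'] (which is automatically finite) is divisible by p^k. -/
open scoped Pointwise

namespace Subgroup

variable {G : Type*} [Group G]

theorem relIndex_inf_eq_of_subset_mul {U V H : Subgroup G} (hVU : V ≤ U)
    (hUHV : (U : Set G) ⊆ H * V) : (V ⊓ H).relIndex (U ⊓ H) = V.relIndex U := by
  let f : ↥(U ⊓ H) ⧸ (V ⊓ H).subgroupOf (U ⊓ H) → ↥U ⧸ V.subgroupOf U :=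
    Quotient.map' (inclusion inf_le_left) fun a b hab => by
      rw [QuotientGroup.leftRel_apply] at hab ⊢
      exact hab.1
  refine Nat.card_eq_of_bijective f ⟨?_, ?_⟩
  · refine Quotient.ind₂' fun a b hab => Quotient.sound' ?_
    replace hab := Quotient.exact' hab
    rw [QuotientGroup.leftRel_apply] at hab ⊢
    exact ⟨hab, H.mul_mem (H.inv_mem (mem_inf.mp a.2).2) (mem_inf.mp b.2).2⟩
  · rintro ⟨u, hu⟩
    obtain ⟨h, hH, v, hV, rfl⟩ := Set.mem_mul.mp (hUHV hu)
    have hU : h ∈ U := by simpa using mul_mem hu (inv_mem (hVU hV))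
    refine ⟨Quotient.mk'' ⟨h, hU, hH⟩, Quotient.sound' ?_⟩
    rw [QuotientGroup.leftRel_apply]
    simpa [mem_subgroupOf] using hV

theorem exists_finite_subset_mul_of_relIndex_ne_zero {U V : Subgroup G}
    (hfin : V.relIndex U ≠ 0) : ∃ S : Set G, S.Finite ∧ (U : Set G) ⊆ S * V := by
  have : Finite (U ⧸ V.subgroupOf U) := Nat.finite_of_card_ne_zero hfin
  refine ⟨Set.range fun q : U ⧸ V.subgroupOf U => (q.out : G), Set.finite_range _, fun u hu => ?_⟩
  obtain ⟨v, hv⟩ := QuotientGroup.mk_out_eq_mul (V.subgroupOf U) ⟨u, hu⟩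
  refine Set.mem_mul.mpr ⟨_, ⟨(⟨u, hu⟩ : U), rfl⟩, _, inv_mem v.2, ?_⟩
  simp [hv]

end Subgroup

theorem IsLocallyElliptic.exists_isCompact_isOpen_subgroup_superset {G : Type*} [Group G]
    [TopologicalSpace G] [SeparatelyContinuousMul G] [WeaklyLocallyCompactSpace G]
    (hG : IsLocallyElliptic G) {K : Set G} (hK : IsCompact K) :
    ∃ H : Subgroup G, IsCompact (H : Set G) ∧ IsOpen (H : Set G) ∧ K ⊆ H := by
  obtain ⟨L, hL, hL1⟩ := exists_compact_mem_nhds (1 : G)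
  obtain ⟨H, hH, hKL⟩ := hG (K ∪ L) (hK.union hL)
  exact ⟨H, hH, H.isOpen_of_mem_nhds (Filter.mem_of_superset hL1 fun x hx => hKL (.inr hx)),
    fun x hx => hKL (.inl hx)⟩

theorem compact_open_witness_of_divisible_index_general
    (G : Type*) [Group G] [TopologicalSpace G] [IsTopologicalGroup G]
    [LocallyCompactSpace G]
    (hle : IsLocallyElliptic G) (p k : ℕ)
    (U V : Subgroup G) (hU : IsOpen (U : Set G)) (hV : IsOpen (V : Set G)) (hVU : V ≤ U)
    (hfin : V.relIndex U ≠ 0) (hdvd : p ^ k ∣ V.relIndex U) :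
    ∃ U' V' : Subgroup G, IsCompact (U' : Set G) ∧ IsOpen (U' : Set G) ∧
      IsCompact (V' : Set G) ∧ IsOpen (V' : Set G) ∧ V' ≤ U' ∧
      V'.relIndex U' ≠ 0 ∧ p ^ k ∣ V'.relIndex U' := by
  obtain ⟨S, hS, hUSV⟩ := Subgroup.exists_finite_subset_mul_of_relIndex_ne_zero hfin
  obtain ⟨H, hHc, hHo, hSH⟩ := hle.exists_isCompact_isOpen_subgroup_superset hS.isCompact
  have hrel : (V ⊓ H).relIndex (U ⊓ H) = V.relIndex U :=
    Subgroup.relIndex_inf_eq_of_subset_mul hVU (hUSV.trans (Set.mul_subset_mul_right hSH))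
  refine ⟨U ⊓ H, V ⊓ H, hHc.inter_left (U.isClosed_of_isOpen hU), hU.inter hHo,
    hHc.inter_left (V.isClosed_of_isOpen hV), hV.inter hHo, inf_le_inf_right H hVU, ?_, ?_⟩
    <;> rwa [hrel]

/-- In a locally elliptic t.d.l.c. group, if some pair of open subgroups
`V ≤ U` has finite index divisible by `p^k`, then such a pair may be found with `U`, `V`
compact open. -/
theorem compact_open_witness_of_divisible_index
    (G : Type*) [Group G] [TopologicalSpace G] [IsTopologicalGroup G]
    [LocallyCompactSpace G] [TotallyDisconnectedSpace G] [T2Space G]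
    (hle : IsLocallyElliptic G) (p k : ℕ) (hp : p.Prime) (hk : 1 ≤ k)
    (U V : Subgroup G) (hU : IsOpen (U : Set G)) (hV : IsOpen (V : Set G)) (hVU : V ≤ U)
    (hfin : V.relIndex U ≠ 0) (hdvd : p ^ k ∣ V.relIndex U) :
    ∃ U' V' : Subgroup G, IsCompact (U' : Set G) ∧ IsOpen (U' : Set G) ∧
      IsCompact (V' : Set G) ∧ IsOpen (V' : Set G) ∧ V' ≤ U' ∧
      V'.relIndex U' ≠ 0 ∧ p ^ k ∣ V'.relIndex U' :=
  compact_open_witness_of_divisible_index_general G hle p k U V hU hV hVU hfin hdvd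
end

section
/- Let p be a prime, G a t.d.l.c. group, H a closed subgroup of G (with the subspace topology), and M ≥ 0. If G admits a left-invariant normed ℚ_p-mean of operator norm ≤ M, then H admits a left-invariant normed ℚ_p-mean of operator norm ≤ M; hence ‖H‖_p ≤ ‖G‖_p. -/
open BoundedContinuousFunction

open Set Filter Topology
open scoped Pointwise

/-!
Pulling bounded continuous functions back along a continuous map `r : G → H` with
`r (h * x) = h * r x` does not increase norms and intertwines left translations, so it turns an
invariant mean on `G` into one on `H` of no larger norm. Such a map is `x ↦ x * (τ x)⁻¹` for a
continuous section `τ` of `G → H \ G`.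

To build `τ`, take a compact open subgroup `V` (van Dantzig). The double cosets `H g V` are open
and partition `G`, and over `H g V` a section comes from one of the compact group
`V → (V ∩ g⁻¹ H g) \ V`. A closed subgroup `K` of a profinite group has a closed transversal: by
Zorn's lemma there is a minimal closed union of cosets `S c` (`S ≤ K`) with exactly one inside
each coset `K x`; it can be shrunk from `S` to `S ⊓ N` for every open normal subgroup `N`, so
`S` is trivial.
-/

section CosetSection

variable {G : Type*} [Group G] [TopologicalSpace G]

/-- A continuous section of `G → H \ G`, encoded as a map `G → G` that is constant on the cosets
`H x` and sends `x` into `H x`. -/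
structure IsCosetSection (H : Subgroup G) (τ : G → G) : Prop where
  continuous : Continuous τ
  mul_inv_mem : ∀ x, x * (τ x)⁻¹ ∈ H
  apply_mul_left : ∀ h ∈ H, ∀ x, τ (h * x) = τ x

theorem IsCosetSection.apply_eq_of_mul_inv_mem {H : Subgroup G} {τ : G → G}
    (hτ : IsCosetSection H τ) {x y : G} (h : y * x⁻¹ ∈ H) : τ y = τ x := by
  simpa using hτ.apply_mul_left _ h x

variable [IsTopologicalGroup G]

def IsCosetSection.toEquivariantMap {H : Subgroup G} {τ : G → G}
    (hτ : IsCosetSection H τ) : C(G, H) :=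
  ⟨fun x => ⟨x * (τ x)⁻¹, hτ.mul_inv_mem x⟩,
    (continuous_id.mul hτ.continuous.inv).subtype_mk hτ.mul_inv_mem⟩

theorem IsCosetSection.toEquivariantMap_mul_left {H : Subgroup G} {τ : G → G}
    (hτ : IsCosetSection H τ) (h : H) (x : G) :
    hτ.toEquivariantMap (h * x) = h * hτ.toEquivariantMap x :=
  Subtype.ext <| by simp [toEquivariantMap, hτ.apply_mul_left h h.2, mul_assoc]

end CosetSection

section PartialTransversal

variable {U : Type*} [Group U] [TopologicalSpace U]

/-- `C` is a closed union of cosets `S c` containing exactly one of them inside each coset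
`K x`. -/
structure IsPartialTransversal (K S : Subgroup U) (C : Set U) : Prop where
  le : S ≤ K
  isClosed : IsClosed C
  mul_mem : ∀ s ∈ S, ∀ c ∈ C, s * c ∈ C
  exists_mem : ∀ x, ∃ c ∈ C, c * x⁻¹ ∈ K
  mul_inv_mem : ∀ c ∈ C, ∀ c' ∈ C, c' * c⁻¹ ∈ K → c' * c⁻¹ ∈ S

namespace IsPartialTransversal

variable {K S : Subgroup U} {C : Set U}

theorem univ (K : Subgroup U) : IsPartialTransversal K K univ where
  le := le_rfl
  isClosed := isClosed_univ
  mul_mem _ _ _ _ := mem_univ _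
  exists_mem x := ⟨x, mem_univ _, by simp⟩
  mul_inv_mem _ _ _ _ h := h

theorem bijective_mul (hC : IsPartialTransversal K ⊥ C) :
    Function.Bijective fun p : K × C => (p.1 : U) * p.2 := by
  refine ⟨fun ⟨k, c⟩ ⟨k', c'⟩ h => ?_, fun x => ?_⟩
  · replace h : (k : U) * c = k' * c' := h
    have hK : (c' : U) * (c : U)⁻¹ ∈ K := by
      rw [show (c' : U) * (c : U)⁻¹ = (k' : U)⁻¹ * k by
        rw [mul_inv_eq_iff_eq_mul, mul_assoc, h, inv_mul_cancel_left]]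
      exact K.mul_mem (K.inv_mem k'.2) k.2
    obtain rfl : c = c' :=
      Subtype.ext (mul_inv_eq_one.mp (hC.mul_inv_mem c c.2 c' c'.2 hK)).symm
    simpa using h
  · obtain ⟨c, hcC, hcK⟩ := hC.exists_mem x
    exact ⟨(⟨(c * x⁻¹)⁻¹, K.inv_mem hcK⟩, ⟨c, hcC⟩), by simp⟩

variable [IsTopologicalGroup U]

theorem biInf [CompactSpace U] (hK : IsClosed (K : Set U)) {P : Set (Subgroup U × Set U)}
    (hP : ∀ p ∈ P, IsPartialTransversal K p.1 p.2) (hPc : IsChain (· ≤ ·) P)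
    (hPne : P.Nonempty) : IsPartialTransversal K (⨅ p ∈ P, p.1) (⋂ p ∈ P, p.2) where
  le := let ⟨p, hp⟩ := hPne; (biInf_le _ hp).trans (hP p hp).le
  isClosed := isClosed_biInter fun p hp => (hP p hp).isClosed
  mul_mem s hs c hc := mem_iInter₂.mpr fun p hp =>
    (hP p hp).mul_mem s (Subgroup.mem_iInf.mp (Subgroup.mem_iInf.mp hs p) hp) c
      (mem_iInter₂.mp hc p hp)
  exists_mem x := by
    have : Nonempty P := hPne.to_subtype
    let f : Subgroup U × Set U → Set U := fun p => p.2 ∩ {c | c * x⁻¹ ∈ K}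
    let F : P → Set U := fun p => f p
    have hFc (p : P) : IsClosed (F p) :=
      (hP p p.2).isClosed.inter (hK.preimage (continuous_mul_const x⁻¹))
    have hFd : Directed (· ⊇ ·) F := IsChain.directed (f := f)
      (hPc.symm.mono_rel fun _ _ hpq => inter_subset_inter_left _ hpq.2)
    obtain ⟨c, hc⟩ := IsCompact.nonempty_iInter_of_directed_nonempty_isCompact_isClosed F hFd
      (fun p => (hP p p.2).exists_mem x) (fun p => (hFc p).isCompact) hFc
    rw [mem_iInter] at hc
    exact ⟨c, mem_iInter₂.mpr fun p hp => (hc ⟨p, hp⟩).1, (hc (Classical.arbitrary P)).2⟩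
  mul_inv_mem c hc c' hc' h := Subgroup.mem_iInf.mpr fun p => Subgroup.mem_iInf.mpr fun hp =>
    (hP p hp).mul_inv_mem c (mem_iInter₂.mp hc p hp) c' (mem_iInter₂.mp hc' p hp) h

/-- Inside each coset of `N ⊔ S`, keep only the points of `C` in the `N`-coset of a fixed
representative. -/
theorem exists_subset_inf (hC : IsPartialTransversal K S C) {N : Subgroup U} [N.Normal]
    (hN : IsOpen (N : Set U)) : ∃ C' ⊆ C, IsPartialTransversal K (S ⊓ N) C' := by
  let T := N ⊔ S
  let rep : U → U := fun z => (Quotient.mk (QuotientGroup.rightRel T) z).out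
  have rep_mul_inv_mem (z : U) : rep z * z⁻¹ ∈ T := by
    simpa using T.inv_mem
      (QuotientGroup.rightRel_apply.mp (Quotient.mk_out (s := QuotientGroup.rightRel T) z))
  have rep_mul (t : U) (ht : t ∈ T) (z : U) : rep (t * z) = rep z :=
    congrArg Quotient.out (Quotient.sound (QuotientGroup.rightRel_apply.mpr (by simpa using ht)))
  have rep_continuous : Continuous rep := continuous_iff_continuousAt.mpr fun z =>
    continuousAt_const.congr <| mem_of_superset
      (((N.isOpen_mono le_sup_left hN).preimage (continuous_mul_const z⁻¹)).mem_nhds (by simp))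
      fun y hy => by simpa using (rep_mul _ hy z).symm
  refine ⟨C ∩ {z | rep z * z⁻¹ ∈ N}, inter_subset_left, ⟨inf_le_left.trans hC.le,
    hC.isClosed.inter ((N.isClosed_of_isOpen hN).preimage (rep_continuous.mul continuous_inv)),
    ?_, fun x => ?_, ?_⟩⟩
  · rintro s ⟨hsS, hsN⟩ c ⟨hcC, hcN⟩
    refine ⟨hC.mul_mem s hsS c hcC, ?_⟩
    simpa [rep_mul s (Subgroup.mem_sup_right hsS), mul_assoc] using N.mul_mem hcN (N.inv_mem hsN)
  · obtain ⟨c, hcC, hcK⟩ := hC.exists_mem x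
    have hcT : rep c * c⁻¹ ∈ (N : Set U) * S := Subgroup.normal_mul N S ▸ rep_mul_inv_mem c
    obtain ⟨n, hn, s, hs, hns : n * s = rep c * c⁻¹⟩ := hcT
    refine ⟨s * c, ⟨hC.mul_mem s hs c hcC, ?_⟩, by simpa [mul_assoc] using K.mul_mem (hC.le hs) hcK⟩
    have hrep : rep c = n * s * c := by rw [hns]; group
    show rep (s * c) * (s * c)⁻¹ ∈ N
    rw [rep_mul s (Subgroup.mem_sup_right hs), hrep]
    simpa [mul_assoc] using hn
  · rintro c ⟨hcC, hcN⟩ c' ⟨hc'C, hc'N⟩ hK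
    have hS := hC.mul_inv_mem c hcC c' hc'C hK
    have hrep : rep c' = rep c := by simpa using rep_mul _ (Subgroup.mem_sup_right hS) c
    exact ⟨hS, by simpa [hrep, mul_assoc] using N.mul_mem (N.inv_mem hc'N) hcN⟩

end IsPartialTransversal

variable [IsTopologicalGroup U]

theorem exists_isPartialTransversal_bot [CompactSpace U] [TotallyDisconnectedSpace U]
    {K : Subgroup U} (hK : IsClosed (K : Set U)) : ∃ C, IsPartialTransversal K ⊥ C := by
  obtain ⟨⟨S, C⟩, -, hmin⟩ := zorn_le_nonempty₀ (α := (Subgroup U × Set U)ᵒᵈ)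
    {p | IsPartialTransversal K p.1 p.2}
    (fun P hP hPc p hp => ⟨OrderDual.toDual (⨅ q ∈ P, (OrderDual.ofDual q).1,
        ⋂ q ∈ P, (OrderDual.ofDual q).2), IsPartialTransversal.biInf hK hP hPc.symm ⟨p, hp⟩,
      fun q hq => ⟨biInf_le (fun q : Subgroup U × Set U => q.1) hq,
        biInter_subset_of_mem (t := fun q : Subgroup U × Set U => q.2) hq⟩⟩)
    (K, univ) (IsPartialTransversal.univ K)
  suffices hS : S = ⊥ from ⟨C, hS ▸ hmin.prop⟩
  refine (Subgroup.eq_bot_iff_forall S).mpr fun g hg => not_not.mp fun hg1 => ?_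
  obtain ⟨N, hN⟩ := ProfiniteGrp.exist_openNormalSubgroup_sub_open_nhds_of_one
    (isOpen_compl_singleton (x := g)) (Ne.symm hg1)
  obtain ⟨C', hC'C, hC'⟩ := hmin.prop.exists_subset_inf N.isOpen'
  have hSN : S ≤ S ⊓ N.toSubgroup :=
    (hmin.2 (y := OrderDual.toDual (S ⊓ N.toSubgroup, C')) hC' ⟨inf_le_left, hC'C⟩).1
  exact hN (hSN hg).2 rfl

theorem exists_isCosetSection_of_compactSpace [CompactSpace U] [TotallyDisconnectedSpace U]
    [T2Space U] {K : Subgroup U} (hK : IsClosed (K : Set U)) :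
    ∃ τ : U → U, IsCosetSection K τ := by
  obtain ⟨C, hC⟩ := exists_isPartialTransversal_bot hK
  have : CompactSpace C := isCompact_iff_compactSpace.mp hC.isClosed.isCompact
  have : CompactSpace K := isCompact_iff_compactSpace.mp hK.isCompact
  let e := (continuous_subtype_val.fst'.mul continuous_subtype_val.snd').homeoOfEquivCompactToT2
    (f := Equiv.ofBijective _ hC.bijective_mul)
  have he (p : K × C) : e p = p.1 * p.2 := rfl
  refine ⟨fun u => (e.symm u).2, (continuous_subtype_val.comp continuous_snd).comp
    e.symm.continuous, fun u => ?_, fun k hk u => ?_⟩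
  · have hu : u = (e.symm u).1 * (e.symm u).2 := by rw [← he, e.apply_symm_apply]
    nth_rw 1 [hu]
    simp
  · have : e.symm (k * u) = (⟨k, hk⟩ * (e.symm u).1, (e.symm u).2) := by
      rw [e.symm_apply_eq, he]
      simp [mul_assoc, ← he]
    simp [this]

end PartialTransversal

section CosetStabilizer

variable {G : Type*} [Group G]

/-- The stabiliser in `V` of the point `H g` of `H \ G`. -/
def cosetStabilizer (H V : Subgroup G) (g : G) : Subgroup V :=
  (H.comap (MulAut.conj g).toMonoidHom).subgroupOf V

theorem mem_cosetStabilizer {H V : Subgroup G} {g : G} {v : V} :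
    v ∈ cosetStabilizer H V g ↔ g * v * g⁻¹ ∈ H := by
  simp [cosetStabilizer, Subgroup.mem_subgroupOf]

theorem isClosed_cosetStabilizer [TopologicalSpace G] [IsTopologicalGroup G] {H : Subgroup G}
    (hH : IsClosed (H : Set G)) (V : Subgroup G) (g : G) :
    IsClosed (cosetStabilizer H V g : Set V) := by
  have : (cosetStabilizer H V g : Set V) = (fun v : V => g * v * g⁻¹) ⁻¹' H := by
    ext; exact mem_cosetStabilizer
  rw [this]
  exact hH.preimage (by fun_prop)

end CosetStabilizer

section LocallyCompactGroup

variable {G : Type*} [Group G] [TopologicalSpace G] [IsTopologicalGroup G]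

theorem exists_isCompact_isOpen_subgroup [LocallyCompactSpace G] [TotallyDisconnectedSpace G]
    [T2Space G] : ∃ V : Subgroup G, IsCompact (V : Set G) ∧ IsOpen (V : Set G) := by
  obtain ⟨L, hLc, hL1⟩ := exists_compact_mem_nhds (1 : G)
  obtain ⟨W, hWclopen, h1W, hWL⟩ := loc_compact_Haus_tot_disc_of_zero_dim.mem_nhds_iff.mp hL1
  have hWc : IsCompact W := hLc.of_isClosed_subset hWclopen.isClosed hWL
  obtain ⟨T, hT, hTW⟩ := compact_open_separated_mul_left hWc hWclopen.isOpen subset_rfl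
  let S := MulAction.stabilizer G W
  have hTS : T ∩ T⁻¹ ⊆ S := fun t ⟨ht, ht'⟩ =>
    ((smul_set_subset_mul ht).trans hTW).antisymm
      (subset_smul_set_iff.mpr ((smul_set_subset_mul (mem_inv.mp ht')).trans hTW))
  have hSo : IsOpen (S : Set G) :=
    S.isOpen_of_mem_nhds (mem_of_superset (inter_mem hT (inv_mem_nhds_one G hT)) hTS)
  have hSW : (S : Set G) ⊆ W := fun g hg => by
    simpa [MulAction.mem_stabilizer_iff.mp hg] using smul_mem_smul_set (a := g) h1W
  exact ⟨S, hWc.of_isClosed_subset (S.isClosed_of_isOpen hSo) hSW, hSo⟩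

/-- With `g` a fixed representative of the double coset `H g V`, the section there is
`h * g * v ↦ g * σ v` for a section `σ` of `V → (cosetStabilizer H V g) \ V`. -/
theorem exists_isCosetSection_of_isCompact_isOpen [TotallyDisconnectedSpace G] [T2Space G]
    {H V : Subgroup G} (hH : IsClosed (H : Set G)) (hVc : IsCompact (V : Set G))
    (hVo : IsOpen (V : Set G)) : ∃ τ : G → G, IsCosetSection H τ := by
  have : CompactSpace V := isCompact_iff_compactSpace.mp hVc
  choose σ hσ using fun g => exists_isCosetSection_of_compactSpace (isClosed_cosetStabilizer hH V g)
  have σ_eq (g x : G) (w w' : V) (hw : x * (w : G)⁻¹ * g⁻¹ ∈ H)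
      (hw' : x * (w' : G)⁻¹ * g⁻¹ ∈ H) : σ g w = σ g w' := by
    refine (hσ g).apply_eq_of_mul_inv_mem (mem_cosetStabilizer.mpr ?_)
    simpa [mul_assoc] using H.mul_mem (H.inv_mem hw) hw'
  let rep : G → G := fun x => (DoubleCoset.mk H V x).out
  have rep_eq (x : G) {y : G} (h : ∃ a ∈ H, ∃ b ∈ V, y = a * x * b) : rep y = rep x :=
    congrArg Quotient.out ((DoubleCoset.eq H V x y).mpr h).symm
  have exists_mem (x : G) : ∃ v : V, x * (v : G)⁻¹ * (rep x)⁻¹ ∈ H := by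
    obtain ⟨a, ha, b, hb, hx⟩ := (DoubleCoset.eq H V (rep x) x).mp (DoubleCoset.out_eq' H V _)
    refine ⟨⟨b, hb⟩, ?_⟩
    convert ha using 1
    rw [mul_inv_eq_iff_eq_mul, mul_inv_eq_iff_eq_mul]
    exact hx
  choose v hv using exists_mem
  let τ : G → G := fun x => rep x * σ (rep x) (v x)
  refine ⟨τ, ⟨continuous_iff_continuousAt.mpr fun x₀ => ?_, fun x => ?_, fun h hh x => ?_⟩⟩
  · let j : V → G := fun u => x₀ * (v x₀ : G)⁻¹ * u
    have hj : IsOpenEmbedding j :=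
      (Homeomorph.mulLeft _).isOpenEmbedding.comp hVo.isOpenEmbedding_subtypeVal
    have hrep (u : V) : rep (j u) = rep x₀ := rep_eq x₀
      ⟨1, H.one_mem, (v x₀ : G)⁻¹ * u, V.mul_mem (V.inv_mem (v x₀).2) u.2, by simp [j, mul_assoc]⟩
    have hτj : τ ∘ j = fun u => rep x₀ * σ (rep x₀) u := by
      ext u
      simp only [τ, Function.comp_apply, hrep]
      rw [σ_eq (rep x₀) (j u) (v (j u)) u (hrep u ▸ hv (j u)) (by simpa [j] using hv x₀)]
    have hx₀ : j (v x₀) = x₀ := by simp [j]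
    rw [← hx₀, ← hj.continuousAt_iff, hτj]
    exact (continuous_const.mul (continuous_subtype_val.comp (hσ _).continuous)).continuousAt
  · simpa [τ, mul_assoc] using H.mul_mem (hv x)
      (mem_cosetStabilizer.mp ((hσ (rep x)).mul_inv_mem (v x)))
  · have hrep : rep (h * x) = rep x := rep_eq x ⟨h, hh, 1, V.one_mem, by simp⟩
    simp only [τ, hrep]
    rw [σ_eq (rep x) (h * x) (v (h * x)) (v x) (hrep ▸ hv (h * x))
      (by simpa [mul_assoc] using H.mul_mem hh (hv x))]

theorem exists_isCosetSection [LocallyCompactSpace G] [TotallyDisconnectedSpace G] [T2Space G]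
    {H : Subgroup G} (hH : IsClosed (H : Set G)) : ∃ τ : G → G, IsCosetSection H τ :=
  let ⟨_, hVc, hVo⟩ := exists_isCompact_isOpen_subgroup (G := G)
  exists_isCosetSection_of_isCompact_isOpen hH hVc hVo

end LocallyCompactGroup

theorem IsInvariantMean.comp_compContinuous_s10 {𝕂 : Type*} [NormedField 𝕂] {G H : Type*} [Group G]
    [TopologicalSpace G] [IsTopologicalGroup G] [Group H] [TopologicalSpace H]
    [IsTopologicalGroup H] {m : (G →ᵇ 𝕂) →ₗ[𝕂] 𝕂} {M : ℝ} (hm : IsInvariantMean 𝕂 G m)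
    (hmM : MeanNormLE 𝕂 G m M) (hM : 0 ≤ M) (φ : H →* G) (r : C(G, H))
    (hr : ∀ h x, r (φ h * x) = h * r x) :
    IsInvariantMean 𝕂 H (m ∘ₗ (compContinuousCLM 𝕂 𝕂 r).toLinearMap) ∧
      MeanNormLE 𝕂 H (m ∘ₗ (compContinuousCLM 𝕂 𝕂 r).toLinearMap) M := by
  have hbound : MeanNormLE 𝕂 H (m ∘ₗ (compContinuousCLM 𝕂 𝕂 r).toLinearMap) M := fun f =>
    (hmM _).trans (mul_le_mul_of_nonneg_left (norm_compContinuous_le f r) hM)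
  refine ⟨⟨⟨M, hbound⟩, ?_, fun h f => ?_⟩, hbound⟩
  · have : (const H (1 : 𝕂)).compContinuous r = const G 1 := by ext; simp
    simpa [this] using hm.2.1
  · have : (leftTranslate 𝕂 h f).compContinuous r =
        leftTranslate 𝕂 (φ h) (f.compContinuous r) := by
      ext x
      simp [leftTranslate, ← map_inv, hr]
    simpa [this] using hm.2.2 (φ h) (f.compContinuous r)

/-- If `H` is a closed subgroup of a t.d.l.c. group `G` and `G` admits a
left-invariant normed `ℚ_p`-mean of operator norm `≤ M`, then so does `H`. -/
theorem invariantMean_of_closedSubgroup (p : ℕ) [Fact p.Prime]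
    (G : Type*) [Group G] [TopologicalSpace G] [IsTopologicalGroup G]
    [LocallyCompactSpace G] [TotallyDisconnectedSpace G] [T2Space G]
    (H : Subgroup G) (hH : IsClosed (H : Set G))
    (M : ℝ) (hM : 0 ≤ M)
    (h : ∃ m : (G →ᵇ ℚ_[p]) →ₗ[ℚ_[p]] ℚ_[p], IsInvariantMean ℚ_[p] G m ∧
      MeanNormLE ℚ_[p] G m M) :
    ∃ m' : (↥H →ᵇ ℚ_[p]) →ₗ[ℚ_[p]] ℚ_[p], IsInvariantMean ℚ_[p] ↥H m' ∧
      MeanNormLE ℚ_[p] ↥H m' M := by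
  obtain ⟨m, hm, hmM⟩ := h
  obtain ⟨τ, hτ⟩ := exists_isCosetSection hH
  exact ⟨_, hm.comp_compContinuous_s10 hmM hM H.subtype hτ.toEquivariantMap
    hτ.toEquivariantMap_mul_left⟩
end

section
/- Let p be a prime and let G be a t.d.l.c. group which is compactly generated, i.e. generated as a group by a compact subset. If G admits a left-invariant normed ℚ_p-mean, then G is compact. -/
open BoundedContinuousFunction

/-!
By van Dantzig's theorem `G` has a compact open subgroup `U`, and compact generation yields a
finite set `s` whose generated subgroup `H` acts transitively on the discrete space `G ⧸ U`.
If `G ⧸ U` is finite, `G` is a finite union of cosets of `U`, hence compact. Otherwise, for each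
finite `Y ⊆ G ⧸ U`, transporting the point masses on `Y` along `H` to a point outside `Y` writes a
function equal to `1` on `Y` as `∑_{g ∈ s} (g • β_g - β_g)` with `ℤ_p`-valued `β_g`. As `ℤ_p` is
compact, a limit of these writes the constant function `1` itself in this form; lifted to `G`,
this contradicts `m 𝟙 = 1` for a left-invariant mean `m`.
-/

open Pointwise Set

section VanDantzig

variable {G : Type*} [Group G] [TopologicalSpace G] [IsTopologicalGroup G]

theorem exists_openSubgroup_subset_of_isCompact_of_isOpen {V : Set G} (hVc : IsCompact V)
    (hVo : IsOpen V) (hV1 : (1 : G) ∈ V) : ∃ U : OpenSubgroup G, (U : Set G) ⊆ V := by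
  obtain ⟨T, hT, hTV⟩ := compact_open_separated_mul_left hVc hVo subset_rfl
  have hsmul : ∀ t ∈ T, t • V ⊆ V := fun t ht => (smul_set_subset_mul ht).trans hTV
  have hstab : T ∩ T⁻¹ ⊆ MulAction.stabilizer G V := fun t ht =>
    (hsmul t ht.1).antisymm <| by
      simpa using smul_set_mono (a := t) (hsmul t⁻¹ ht.2)
  refine ⟨⟨MulAction.stabilizer G V, Subgroup.isOpen_of_mem_nhds _
    (Filter.mem_of_superset (Filter.inter_mem hT (inv_mem_nhds_one G hT)) hstab)⟩, ?_⟩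
  intro g hg
  have hgV : g • (1 : G) ∈ g • V := smul_mem_smul_set hV1
  rwa [show g • V = V from hg, smul_eq_mul, mul_one] at hgV

variable [LocallyCompactSpace G] [TotallyDisconnectedSpace G] [T2Space G]

theorem exists_isCompact_openSubgroup : ∃ U : OpenSubgroup G, IsCompact (U : Set G) := by
  obtain ⟨C, hC, hC1⟩ := exists_compact_mem_nhds (1 : G)
  obtain ⟨V, hV, hV1, hVC⟩ :=
    loc_compact_Haus_tot_disc_of_zero_dim.mem_nhds_iff.1 (interior_mem_nhds.2 hC1)
  have hVc : IsCompact V := hC.of_isClosed_subset hV.isClosed (hVC.trans interior_subset)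
  obtain ⟨U, hUV⟩ := exists_openSubgroup_subset_of_isCompact_of_isOpen hVc hV.isOpen hV1
  exact ⟨U, hVc.of_isClosed_subset U.isClosed hUV⟩

end VanDantzig

section CompactlyGenerated

variable {G : Type*} [Group G] [TopologicalSpace G] [IsTopologicalGroup G]

theorem IsCompact.exists_finset_subset_mul (U : OpenSubgroup G) {C : Set G} (hC : IsCompact C) :
    ∃ s : Finset G, C ⊆ (s : Set G) * U := by
  obtain ⟨s, -, hCs⟩ := hC.elim_nhds_subcover (fun g => g • (U : Set G))
    fun g _ => (U.isOpen.smul g).mem_nhds ⟨1, U.one_mem, mul_one g⟩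
  exact ⟨s, hCs.trans iUnion_mul_left_image.subset⟩

theorem exists_finset_closure_transitive_on_quotient {K : Set G} (hK : IsCompact K)
    (hgen : Subgroup.closure K = ⊤) (U : OpenSubgroup G) (hU : IsCompact (U : Set G)) :
    ∃ s : Finset G,
      ∀ x y : G ⧸ (U : Subgroup G), ∃ h ∈ Subgroup.closure (s : Set G), h • x = y := by
  obtain ⟨s, hs⟩ := (hU.mul (hK.union hK.inv)).exists_finset_subset_mul U
  set H := Subgroup.closure (s : Set G)
  have hstep : ∀ g ∈ (H : Set G) * U, ∀ k ∈ K ∪ K⁻¹, g * k ∈ (H : Set G) * U := by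
    rintro _ ⟨h, hh, u, hu, rfl⟩ k hk
    obtain ⟨t, ht, v, hv, htv⟩ := hs (mul_mem_mul hu hk)
    refine ⟨h * t, H.mul_mem hh (Subgroup.subset_closure ht), v, hv, ?_⟩
    simp only at htv ⊢
    rw [mul_assoc, htv, mul_assoc]
  have hHU : ∀ g : G, g ∈ (H : Set G) * U := fun g => by
    induction (hgen ▸ Subgroup.mem_top g : g ∈ Subgroup.closure K)
      using Subgroup.closure_induction_right with
    | one => exact ⟨1, H.one_mem, 1, U.one_mem, mul_one 1⟩
    | mul_right x _ k hk ih => exact hstep x ih k (Or.inl hk)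
    | mul_inv_cancel x _ k hk ih => exact hstep x ih k⁻¹ (Or.inr (inv_mem_inv.2 hk))
  have hbase (x : G ⧸ (U : Subgroup G)) : ∃ h ∈ H, h • ((1 : G) : G ⧸ (U : Subgroup G)) = x := by
    obtain ⟨g, rfl⟩ := QuotientGroup.mk_surjective x
    obtain ⟨h, hh, u, hu, rfl⟩ := hHU g
    exact ⟨h, hh, (QuotientGroup.eq.2 (by simpa using hu)).symm⟩
  refine ⟨s, fun x y => ?_⟩
  obtain ⟨a, ha, rfl⟩ := hbase x
  obtain ⟨b, hb, rfl⟩ := hbase y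
  exact ⟨b * a⁻¹, H.mul_mem hb (H.inv_mem ha), by rw [mul_smul, inv_smul_smul]⟩

theorem compactSpace_of_isCompact_of_finite_quotient {U : Subgroup G} (hU : IsCompact (U : Set G))
    [Finite (G ⧸ U)] : CompactSpace G := by
  refine ⟨((finite_range (Quotient.out : G ⧸ U → G)).isCompact.mul hU).of_isClosed_subset
    isClosed_univ fun g _ => ?_⟩
  obtain ⟨u, hu⟩ := QuotientGroup.mk_out_eq_mul U g
  exact ⟨_, mem_range_self (g : G ⧸ U), _, U.inv_mem u.2, by simp [hu]⟩

end CompactlyGenerated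

theorem exists_eq_of_forall_finset_exists_eqOn {A X R : Type*} [TopologicalSpace A]
    [CompactSpace A] [TopologicalSpace R] [T2Space R] {Φ : A → X → R} (hΦ : Continuous Φ)
    (c : X → R) (h : ∀ Y : Finset X, ∃ a, EqOn (Φ a) c Y) : ∃ a, Φ a = c := by
  obtain ⟨a, -, ha⟩ := isCompact_univ.inter_iInter_nonempty (fun x => {a | Φ a x = c x})
    (fun x => isClosed_eq ((continuous_apply x).comp hΦ) continuous_const)
    fun Y => (h Y).imp fun a ha => ⟨trivial, mem_iInter₂.2 ha⟩
  exact ⟨a, funext (mem_iInter.1 ha)⟩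

section SumTranslateSub

variable {G X : Type*} [Group G] [MulAction G X] (R : Type*) [AddCommGroup R]

def sumTranslateSub (s : Finset G) : (G → X → R) →+ (X → R) where
  toFun β x := ∑ g ∈ s, (β g (g⁻¹ • x) - β g x)
  map_zero' := by ext; simp
  map_add' β γ := by ext; simp only [Pi.add_apply, add_sub_add_comm, Finset.sum_add_distrib]

variable {R}

theorem sumTranslateSub_apply (s : Finset G) (β : G → X → R) (x : X) :
    sumTranslateSub R s β x = ∑ g ∈ s, (β g (g⁻¹ • x) - β g x) := rfl

theorem single_sub_single_smul_mem_range_sumTranslateSub [DecidableEq X] {s : Finset G} {h : G}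
    (hh : h ∈ Subgroup.closure (s : Set G)) (x : X) (r : R) :
    Pi.single x r - Pi.single (h • x) r ∈ (sumTranslateSub R s).range := by
  induction hh using Subgroup.closure_induction generalizing x with
  | mem g hg =>
    classical
    refine ⟨-Pi.single g (Pi.single x r), funext fun y => ?_⟩
    rw [sumTranslateSub_apply, Finset.sum_eq_single_of_mem g hg fun g' _ hg' => by simp [hg']]
    simp [Pi.single_apply, inv_smul_eq_iff, neg_add_eq_sub]
  | one => simp
  | mul g₁ g₂ _ _ ih₁ ih₂ => simpa [mul_smul] using add_mem (ih₂ x) (ih₁ (g₂ • x))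
  | inv g _ ih => simpa using neg_mem (ih (g⁻¹ • x))

variable [DecidableEq X] {s : Finset G}

theorem single_sub_single_mem_range_sumTranslateSub
    (hs : ∀ x y : X, ∃ h ∈ Subgroup.closure (s : Set G), h • x = y) (x y : X) (r : R) :
    Pi.single x r - Pi.single y r ∈ (sumTranslateSub R s).range := by
  obtain ⟨h, hh, rfl⟩ := hs x y
  exact single_sub_single_smul_mem_range_sumTranslateSub hh x r

variable [Infinite X]

theorem exists_eqOn_sumTranslateSub_const
    (hs : ∀ x y : X, ∃ h ∈ Subgroup.closure (s : Set G), h • x = y) (r : R) (Y : Finset X) :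
    ∃ β, EqOn (sumTranslateSub R s β) (fun _ => r) (Y : Set X) := by
  obtain ⟨z, hz⟩ := Infinite.exists_notMem_finset Y
  -- Push the mass `r` at each point of `Y` along `closure s` to the point `z ∉ Y`.
  obtain ⟨β, hβ⟩ := sum_mem fun x (_ : x ∈ Y) =>
    single_sub_single_mem_range_sumTranslateSub hs x z r
  refine ⟨β, fun x hx => ?_⟩
  simp [hβ, Finset.sum_apply, Pi.single_apply, ne_of_mem_of_not_mem hx hz, Finset.mem_coe.1 hx]

theorem exists_sumTranslateSub_eq_const [TopologicalSpace R] [IsTopologicalAddGroup R]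
    [CompactSpace R] [T2Space R] (hs : ∀ x y : X, ∃ h ∈ Subgroup.closure (s : Set G), h • x = y)
    (r : R) : ∃ β : G → X → R, sumTranslateSub R s β = fun _ => r :=
  exists_eq_of_forall_finset_exists_eqOn
    (continuous_pi fun x => by simp only [sumTranslateSub_apply]; fun_prop) _
    (exists_eqOn_sumTranslateSub_const hs r)

end SumTranslateSub

section InvariantMean

variable {G : Type*} [Group G] [TopologicalSpace G] [IsTopologicalGroup G]

theorem IsInvariantMean.sum_leftTranslate_sub_ne_const_one {𝕂 : Type*} [NormedField 𝕂]
    {m : (G →ᵇ 𝕂) →ₗ[𝕂] 𝕂} (hm : IsInvariantMean 𝕂 G m) {ι : Type*} (s : Finset ι) (g : ι → G)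
    (f : ι → G →ᵇ 𝕂) : ∑ i ∈ s, (leftTranslate 𝕂 (g i) (f i) - f i) ≠ const G 1 := fun h => by
  simpa [hm.2.1, hm.2.2] using congrArg m h

theorem IsInvariantMean.sumTranslateSub_ne_one {p : ℕ} [Fact p.Prime]
    {m : (G →ᵇ ℚ_[p]) →ₗ[ℚ_[p]] ℚ_[p]} (hm : IsInvariantMean ℚ_[p] G m) (U : OpenSubgroup G)
    (s : Finset G) (β : G → G ⧸ (U : Subgroup G) → ℤ_[p]) :
    sumTranslateSub ℤ_[p] s β ≠ fun _ => 1 := fun hβ => by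
  let f (g : G) : G →ᵇ ℚ_[p] := .ofNormedAddCommGroup (fun x => (β g x : ℚ_[p]))
    ((continuous_of_discreteTopology (f := fun q => (β g q : ℚ_[p]))).comp
      continuous_quotient_mk') 1
    fun x => PadicInt.norm_le_one _
  refine hm.sum_leftTranslate_sub_ne_const_one s id f (BoundedContinuousFunction.ext fun x => ?_)
  have := congrArg ((↑) : ℤ_[p] → ℚ_[p]) (congrFun hβ x)
  push_cast [sumTranslateSub_apply] at this
  simpa [leftTranslate, f] using this

end InvariantMean

/-- A compactly generated t.d.l.c. group admitting a left-invariant normed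
`ℚ_p`-mean is compact. -/
theorem compact_of_compactlyGenerated_invariantMean (p : ℕ) [Fact p.Prime]
    (G : Type*) [Group G] [TopologicalSpace G] [IsTopologicalGroup G]
    [LocallyCompactSpace G] [TotallyDisconnectedSpace G] [T2Space G]
    (K : Set G) (hK : IsCompact K) (hgen : Subgroup.closure K = ⊤)
    (h : ∃ m : (G →ᵇ ℚ_[p]) →ₗ[ℚ_[p]] ℚ_[p], IsInvariantMean ℚ_[p] G m) :
    CompactSpace G := by
  classical
  obtain ⟨m, hm⟩ := h
  obtain ⟨U, hU⟩ := exists_isCompact_openSubgroup (G := G)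
  obtain ⟨s, hs⟩ := exists_finset_closure_transitive_on_quotient hK hgen U hU
  cases finite_or_infinite (G ⧸ (U : Subgroup G))
  · exact compactSpace_of_isCompact_of_finite_quotient hU
  · obtain ⟨β, hβ⟩ := exists_sumTranslateSub_eq_const hs (1 : ℤ_[p])
    exact absurd hβ (hm.sumTranslateSub_ne_one U s β)
end

section
/- Let 𝕂 be a field equipped with a non-Archimedean absolute value and let G be a discrete group admitting a left-invariant normed 𝕂-mean. Let F be a normed 𝕂-vector space on which G acts by linear isometries, and let E = F* be its continuous dual, equipped with the operator norm and the dual G-action (g·λ)(x) = λ(g⁻¹·x). Then for every n ≥ 1, every bounded G-equivariant function f : G^{n+1} → E (equivariance meaning f(g·g₀, …, g·gₙ) = g·f(g₀, …, gₙ) for all g) satisfying δf = 0, where (δf)(g₀,…,g_{n+1}) = Σ_{i=0}^{n+1} (−1)^i f(g₀,…,ĝ_i,…,g_{n+1}) (omitting the i-th entry), is of the form f = δu for some bounded G-equivariant function u : G^n → E. In other words, the bounded cohomology H^n_b(G,E) vanishes for all n ≥ 1 and every dual normed 𝕂[G]-module E. -/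
open BoundedContinuousFunction

/-!
Averaging with the invariant mean is a contracting homotopy. For a cocycle `f`, put
`u x v = m (g ↦ f (g, x) v)`: the cocycle identity at `(g, x)` writes `f x` as the alternating sum
of the `f (g, x̂ᵢ)`, and since `m` fixes constants, averaging it over `g` gives `f = δu`; left
invariance of `m` turns the equivariance of `f` into that of `u`. Only the duality `E = F*` makes
this averaging possible: a bounded family of functionals, evaluated at `v ∈ F`, is a bounded scalar
function of `g`, which `m` can average.
-/

theorem eq_sum_cons_of_cocycle {α M : Type*} [AddCommGroup M] {n : ℕ}
    {f : (Fin (n + 1) → α) → M}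
    (hf : ∀ x : Fin (n + 2) → α,
      (∑ i : Fin (n + 2), ((-1 : ℤ) ^ (i : ℕ)) • f (fun j => x (i.succAbove j))) = 0)
    (a : α) (x : Fin (n + 1) → α) :
    f x = ∑ i : Fin (n + 1), ((-1 : ℤ) ^ (i : ℕ)) • f (Fin.cons a fun j => x (i.succAbove j)) := by
  have h := hf (Fin.cons a x)
  rw [Fin.sum_univ_succ] at h
  simp only [Fin.val_zero, pow_zero, one_smul, Fin.succAbove_zero, Fin.cons_succ, Fin.val_succ,
    pow_succ, mul_neg_one, neg_smul, Finset.sum_neg_distrib] at h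
  rw [← sub_eq_zero, sub_eq_add_neg, ← h]
  congr 3
  funext i
  congr 2
  exact (Fin.cons_comp_succ_succAbove a x i).symm

section DualMean

variable {𝕂 : Type*} [NormedField 𝕂] {X : Type*} [TopologicalSpace X]
  {F : Type*} [NormedAddCommGroup F] [NormedSpace 𝕂 F]
  {m : (X →ᵇ 𝕂) →ₗ[𝕂] 𝕂} {Cm : ℝ} {φ : X → F →L[𝕂] 𝕂} {C : ℝ}

theorem nonneg_of_norm_map_le [Nonempty X] (hm : ∀ ψ : X →ᵇ 𝕂, ‖m ψ‖ ≤ Cm * ‖ψ‖) : 0 ≤ Cm := by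
  simpa [norm_const_eq] using (norm_nonneg _).trans (hm (const X 1))

variable [DiscreteTopology X]

noncomputable def evalFamily (hφ : ∀ x v, ‖φ x v‖ ≤ C * ‖v‖) (v : F) : X →ᵇ 𝕂 :=
  ofNormedAddCommGroupDiscrete (fun x => φ x v) (C * ‖v‖) (hφ · v)

@[simp]
theorem evalFamily_apply (hφ : ∀ x v, ‖φ x v‖ ≤ C * ‖v‖) (v : F) (x : X) :
    evalFamily hφ v x = φ x v :=
  rfl

theorem norm_map_evalFamily_le [Nonempty X] (hm : ∀ ψ : X →ᵇ 𝕂, ‖m ψ‖ ≤ Cm * ‖ψ‖)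
    (hφ : ∀ x v, ‖φ x v‖ ≤ C * ‖v‖) (v : F) : ‖m (evalFamily hφ v)‖ ≤ Cm * C * ‖v‖ :=
  calc ‖m (evalFamily hφ v)‖ ≤ Cm * ‖evalFamily hφ v‖ := hm _
    _ ≤ Cm * (C * ‖v‖) :=
      mul_le_mul_of_nonneg_left (norm_le_of_nonempty.2 (hφ · v)) (nonneg_of_norm_map_le hm)
    _ = Cm * C * ‖v‖ := (mul_assoc ..).symm

variable [Nonempty X]

noncomputable def dualMean (m : (X →ᵇ 𝕂) →ₗ[𝕂] 𝕂) (hm : ∀ ψ : X →ᵇ 𝕂, ‖m ψ‖ ≤ Cm * ‖ψ‖)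
    (φ : X → F →L[𝕂] 𝕂) (hφ : ∀ x v, ‖φ x v‖ ≤ C * ‖v‖) : F →L[𝕂] 𝕂 :=
  LinearMap.mkContinuous
    { toFun := fun v => m (evalFamily hφ v)
      map_add' := fun v w => by rw [← map_add]; congr 1; ext; simp
      map_smul' := fun c v => by rw [RingHom.id_apply, ← map_smul]; congr 1; ext; simp }
    (Cm * C) (norm_map_evalFamily_le hm hφ)

variable (hm : ∀ ψ : X →ᵇ 𝕂, ‖m ψ‖ ≤ Cm * ‖ψ‖)

theorem dualMean_apply (hφ : ∀ x v, ‖φ x v‖ ≤ C * ‖v‖) (v : F) :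
    dualMean m hm φ hφ v = m (evalFamily hφ v) :=
  rfl

theorem norm_dualMean_apply_le (hφ : ∀ x v, ‖φ x v‖ ≤ C * ‖v‖) (v : F) :
    ‖dualMean m hm φ hφ v‖ ≤ Cm * C * ‖v‖ :=
  norm_map_evalFamily_le hm hφ v

theorem dualMean_const (hone : m (const X 1) = 1) (ℓ : F →L[𝕂] 𝕂)
    (hℓ : ∀ (_ : X) v, ‖ℓ v‖ ≤ C * ‖v‖) : dualMean m hm (fun _ => ℓ) hℓ = ℓ := by
  ext v
  have : evalFamily hℓ v = ℓ v • const X 1 := by ext; simp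
  rw [dualMean_apply, this, map_smul, hone, smul_eq_mul, mul_one]

theorem dualMean_eq_sum {ι : Type*} (s : Finset ι) (c : ι → ℤ) {ψ : ι → X → F →L[𝕂] 𝕂}
    {C' : ℝ} (hψ : ∀ i x v, ‖ψ i x v‖ ≤ C' * ‖v‖) (hφ : ∀ x v, ‖φ x v‖ ≤ C * ‖v‖)
    (h : ∀ x, φ x = ∑ i ∈ s, c i • ψ i x) :
    dualMean m hm φ hφ = ∑ i ∈ s, c i • dualMean m hm (ψ i) (hψ i) := by
  ext v
  have : evalFamily hφ v = ∑ i ∈ s, c i • evalFamily (hψ i) v := by ext; simp [h]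
  simp only [dualMean_apply, this, map_sum, map_zsmul, _root_.sum_apply, FunLike.coe_smul,
    Pi.smul_apply]

end DualMean

section InvariantMean

variable {𝕂 : Type*} [NormedField 𝕂] {G : Type*} [Group G] [TopologicalSpace G]
  [IsTopologicalGroup G] {m : (G →ᵇ 𝕂) →ₗ[𝕂] 𝕂}

theorem map_eq_of_forall_apply_mul_eq
    (hinv : ∀ (g : G) (ψ : G →ᵇ 𝕂), m (leftTranslate 𝕂 g ψ) = m ψ)
    {ψ χ : G →ᵇ 𝕂} (s : G) (h : ∀ g, ψ (s * g) = χ g) : m ψ = m χ := by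
  rw [← hinv s χ]
  congr 1
  ext g
  simpa [leftTranslate] using h (s⁻¹ * g)

end InvariantMean

theorem bounded_cohomology_vanishes_of_invariantMean_general
    (𝕂 : Type*) [NormedField 𝕂]
    (G : Type*) [Group G] [TopologicalSpace G] [DiscreteTopology G] [IsTopologicalGroup G]
    (hmean : ∃ m : (G →ᵇ 𝕂) →ₗ[𝕂] 𝕂, IsInvariantMean 𝕂 G m)
    (F : Type*) [NormedAddCommGroup F] [NormedSpace 𝕂 F]
    (ρ : G →* (F ≃ₗᵢ[𝕂] F))
    (n : ℕ)
    (f : (Fin (n + 2) → G) → (F →L[𝕂] 𝕂))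
    (hbdd : ∃ C : ℝ, ∀ (x : Fin (n + 2) → G) (v : F), ‖f x v‖ ≤ C * ‖v‖)
    (hequiv : ∀ (g : G) (x : Fin (n + 2) → G) (v : F),
      f (fun j => g * x j) v = f x (ρ g⁻¹ v))
    (hcocycle : ∀ x : Fin (n + 3) → G,
      (∑ i : Fin (n + 3), ((-1 : ℤ) ^ (i : ℕ)) • f (fun j => x (i.succAbove j))) = 0) :
    ∃ u : (Fin (n + 1) → G) → (F →L[𝕂] 𝕂),
      (∃ C : ℝ, ∀ (x : Fin (n + 1) → G) (v : F), ‖u x v‖ ≤ C * ‖v‖) ∧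
      (∀ (g : G) (x : Fin (n + 1) → G) (v : F),
        u (fun j => g * x j) v = u x (ρ g⁻¹ v)) ∧
      (∀ x : Fin (n + 2) → G,
        f x = ∑ i : Fin (n + 2), ((-1 : ℤ) ^ (i : ℕ)) • u (fun j => x (i.succAbove j))) := by
  obtain ⟨m, ⟨Cm, hm⟩, hone, hinv⟩ := hmean
  obtain ⟨C, hC⟩ := hbdd
  have hslice (x : Fin (n + 1) → G) : ∀ g v, ‖f (Fin.cons g x) v‖ ≤ C * ‖v‖ := fun g => hC _
  refine ⟨fun x => dualMean m hm (fun g => f (Fin.cons g x)) (hslice x),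
    ⟨Cm * C, fun x => norm_dualMean_apply_le hm (hslice x)⟩, fun s x v => ?_, fun x => ?_⟩
  · rw [dualMean_apply, dualMean_apply]
    refine map_eq_of_forall_apply_mul_eq hinv s fun g => ?_
    rw [evalFamily_apply, evalFamily_apply, ← hequiv]
    exact congrArg (f · v) (Fin.comp_cons (s * ·) g x).symm
  · rw [← dualMean_const hm hone (f x) (fun _ => hC x)]
    exact dualMean_eq_sum hm _ _ _ _ fun g => eq_sum_cons_of_cocycle hcocycle g x

/-- If a discrete group `G` admits a left-invariant normed `𝕂`-mean, then for
every dual normed `𝕂[G]`-module `E = F*` (continuous linear functionals on `F` with the operator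
norm, with dual action `(g·λ)(v) = λ(g⁻¹·v)`) and every `n ≥ 1`, every bounded `G`-equivariant
homogeneous `n`-cocycle with values in `E` is the coboundary of a bounded `G`-equivariant
homogeneous `(n-1)`-cochain; i.e. `H^n_b(G, E) = 0`. (Boundedness of a family of functionals
with operator norm `≤ C` is expressed pointwise as `‖f x v‖ ≤ C * ‖v‖`.) -/
theorem bounded_cohomology_vanishes_of_invariantMean
    (𝕂 : Type*) [NormedField 𝕂] [IsUltrametricDist 𝕂]
    (G : Type*) [Group G] [TopologicalSpace G] [DiscreteTopology G] [IsTopologicalGroup G]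
    (hmean : ∃ m : (G →ᵇ 𝕂) →ₗ[𝕂] 𝕂, IsInvariantMean 𝕂 G m)
    (F : Type*) [NormedAddCommGroup F] [NormedSpace 𝕂 F] [IsUltrametricDist F]
    (ρ : G →* (F ≃ₗᵢ[𝕂] F))
    (n : ℕ)
    (f : (Fin (n + 2) → G) → (F →L[𝕂] 𝕂))
    (hbdd : ∃ C : ℝ, ∀ (x : Fin (n + 2) → G) (v : F), ‖f x v‖ ≤ C * ‖v‖)
    (hequiv : ∀ (g : G) (x : Fin (n + 2) → G) (v : F),
      f (fun j => g * x j) v = f x (ρ g⁻¹ v))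
    (hcocycle : ∀ x : Fin (n + 3) → G,
      (∑ i : Fin (n + 3), ((-1 : ℤ) ^ (i : ℕ)) • f (fun j => x (i.succAbove j))) = 0) :
    ∃ u : (Fin (n + 1) → G) → (F →L[𝕂] 𝕂),
      (∃ C : ℝ, ∀ (x : Fin (n + 1) → G) (v : F), ‖u x v‖ ≤ C * ‖v‖) ∧
      (∀ (g : G) (x : Fin (n + 1) → G) (v : F),
        u (fun j => g * x j) v = u x (ρ g⁻¹ v)) ∧
      (∀ x : Fin (n + 2) → G,
        f x = ∑ i : Fin (n + 2), ((-1 : ℤ) ^ (i : ℕ)) • u (fun j => x (i.succAbove j))) :=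
  bounded_cohomology_vanishes_of_invariantMean_general 𝕂 G hmean F ρ n f hbdd hequiv hcocycle
end

section
/- Let 𝕂 be a field equipped with a non-Archimedean absolute value such that either char 𝕂 = p > 0, or ‖(n : 𝕂)‖ = 1 for every positive integer n (i.e. the residue field of 𝕂 has characteristic 0). Then for every topological group G, every continuous quasimorphism f : G → 𝕂 is trivial: there exist a continuous homomorphism h : G → (𝕂,+) and a constant C ≥ 0 such that ‖f(g) − h(g)‖ ≤ C for all g ∈ G. -/
/-!
The closed ball `B` of radius `r` about `0` in `𝕂` is an additive subgroup, and it is stable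
under the prime field, whose elements have norm `≤ 1`: in characteristic `p` they are images of
integers, and if `‖n‖ = 1` for all `n > 0` then `‖a / n‖ = ‖a‖ ≤ 1` for `a ∈ ℤ`. So `B` is a
subspace over the prime field, and a linear section of `𝕂 → 𝕂 ⧸ B` yields an additive
`π : 𝕂 → 𝕂` that kills `B` and moves every point by an element of `B`. For `f` of defect `≤ r`,
`π ∘ f` is then a homomorphism within `r` of `f`; it vanishes on `f⁻¹ B ∋ 1`, which is open when
`r > 0` since balls are open in an ultrametric space, so `π ∘ f` is locally constant.
-/

open Metric Filter Topology IsUltrametricDist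

theorem Submodule.exists_linearMap_eq_zero_of_mem_of_sub_mem {K V : Type*} [DivisionRing K]
    [AddCommGroup V] [Module K V] (p : Submodule K V) :
    ∃ π : V →ₗ[K] V, (∀ x ∈ p, π x = 0) ∧ ∀ x, x - π x ∈ p := by
  obtain ⟨s, hs⟩ := p.mkQ.exists_rightInverse_of_surjective p.range_mkQ
  refine ⟨s ∘ₗ p.mkQ, fun x hx => by simp [(Submodule.Quotient.mk_eq_zero p).2 hx], fun x => ?_⟩
  rw [← Submodule.Quotient.mk_eq_zero, ← p.mkQ_apply, map_sub]
  simpa using sub_eq_zero.2 (LinearMap.congr_fun hs (p.mkQ x)).symm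

section ClosedBall

variable {F E : Type*} [Field F] [SeminormedAddCommGroup E] [IsUltrametricDist E] [Module F E]

def closedBallSubmodule (hs : ∀ (c : F) (x : E), ‖c • x‖ ≤ ‖x‖) {r : ℝ} (hr : 0 ≤ r) :
    Submodule F E where
  carrier := closedBall 0 r
  add_mem' {x y} hx hy := by
    simp only [mem_closedBall_zero_iff] at hx hy ⊢
    exact (norm_add_le_max x y).trans (max_le hx hy)
  zero_mem' := mem_closedBall_self hr
  smul_mem' c x hx := by
    simp only [mem_closedBall_zero_iff] at hx ⊢
    exact (hs c x).trans hx

theorem exists_addMonoidHom_vanishing_on_closedBall_of_norm_smul_le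
    (hs : ∀ (c : F) (x : E), ‖c • x‖ ≤ ‖x‖) {r : ℝ} (hr : 0 ≤ r) :
    ∃ π : E →+ E, (∀ x, ‖x‖ ≤ r → π x = 0) ∧ ∀ x, ‖x - π x‖ ≤ r := by
  obtain ⟨π, hπ, hsub⟩ :=
    (closedBallSubmodule hs hr).exists_linearMap_eq_zero_of_mem_of_sub_mem
  exact ⟨π.toAddMonoidHom, fun x hx => hπ x (mem_closedBall_zero_iff.2 hx),
    fun x => mem_closedBall_zero_iff.1 (hsub x)⟩

end ClosedBall

theorem IsUltrametricDist.norm_zmod_smul_le {E : Type*} [SeminormedAddCommGroup E]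
    [IsUltrametricDist E] {p : ℕ} [NeZero p] [Module (ZMod p) E] (c : ZMod p) (x : E) :
    ‖c • x‖ ≤ ‖x‖ := by
  rw [← ZMod.natCast_zmod_val c, Nat.cast_smul_eq_nsmul]
  exact norm_nsmul_le x _

theorem charZero_of_forall_norm_natCast_eq_one {R : Type*} [SeminormedRing R]
    (h : ∀ n : ℕ, 0 < n → ‖(n : R)‖ = 1) : CharZero R :=
  charZero_of_inj_zero fun n hn => by
    by_contra hne
    simpa [hn] using h n (Nat.pos_of_ne_zero hne)

theorem IsUltrametricDist.norm_ratCast_le_one {R : Type*} [NormedDivisionRing R]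
    [IsUltrametricDist R] (h : ∀ n : ℕ, 0 < n → ‖(n : R)‖ = 1) (q : ℚ) : ‖(q : R)‖ ≤ 1 := by
  rw [Rat.cast_def, norm_div, h q.den q.pos, div_one]
  exact norm_intCast_le_one R q.num

theorem exists_addMonoidHom_vanishing_on_closedBall {𝕂 : Type*} [NormedDivisionRing 𝕂]
    [IsUltrametricDist 𝕂]
    (hchar : (∃ p : ℕ, 0 < p ∧ CharP 𝕂 p) ∨ (∀ n : ℕ, 0 < n → ‖(n : 𝕂)‖ = 1))
    {r : ℝ} (hr : 0 ≤ r) :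
    ∃ π : 𝕂 →+ 𝕂, (∀ x, ‖x‖ ≤ r → π x = 0) ∧ ∀ x, ‖x - π x‖ ≤ r := by
  rcases hchar with ⟨p, hp, hcp⟩ | hres
  · have : NeZero p := ⟨hp.ne'⟩
    have : Fact p.Prime := CharP.char_is_prime_of_pos 𝕂 p
    let := ZMod.algebra 𝕂 p
    exact exists_addMonoidHom_vanishing_on_closedBall_of_norm_smul_le (F := ZMod p) (E := 𝕂)
      norm_zmod_smul_le hr
  · have := charZero_of_forall_norm_natCast_eq_one hres
    refine exists_addMonoidHom_vanishing_on_closedBall_of_norm_smul_le (F := ℚ) (E := 𝕂)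
      (fun c x => ?_) hr
    rw [Rat.smul_def, norm_mul]
    exact mul_le_of_le_one_left (norm_nonneg x) (norm_ratCast_le_one hres c)

theorem map_mul_comp_of_norm_map_mul_sub_le {G E : Type*} [Mul G] [SeminormedAddCommGroup E]
    {f : G → E} {r : ℝ} (hf : ∀ x y, ‖f (x * y) - f x - f y‖ ≤ r) {π : E →+ E}
    (hπ : ∀ x, ‖x‖ ≤ r → π x = 0) (x y : G) :
    π (f (x * y)) = π (f x) + π (f y) := by
  rw [← sub_add_cancel (f (x * y)) (f x + f y), map_add, hπ _ (by simpa [sub_sub] using hf x y),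
    zero_add, map_add]

theorem continuous_of_map_mul_of_eventually_eq_zero {G A : Type*} [Group G] [TopologicalSpace G]
    [ContinuousMul G] [AddGroup A] [TopologicalSpace A] {h : G → A}
    (hmul : ∀ x y, h (x * y) = h x + h y) (h1 : ∀ᶠ y in 𝓝 1, h y = 0) : Continuous h := by
  refine continuous_iff_continuousAt.2 fun x => ?_
  have hx : Tendsto (· * x⁻¹) (𝓝 x) (𝓝 1) := by
    simpa using (continuous_mul_const x⁻¹).tendsto x
  refine (continuousAt_const (y := h x)).congr ((hx.eventually h1).mono fun y hy => ?_)
  rw [← inv_mul_cancel_right y x, hmul, hy, zero_add]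

/-- Over a non-Archimedean valued field `𝕂` which has positive characteristic
or whose residue field has characteristic `0` (i.e. `‖(n : 𝕂)‖ = 1` for all positive integers
`n`), every continuous quasimorphism on any topological group is trivial: it lies at bounded
distance from a continuous homomorphism. -/
theorem quasimorphism_trivial_of_equal_char
    (𝕂 : Type*) [NormedField 𝕂] [IsUltrametricDist 𝕂]
    (hchar : (∃ p : ℕ, 0 < p ∧ CharP 𝕂 p) ∨ (∀ n : ℕ, 0 < n → ‖(n : 𝕂)‖ = 1))
    (G : Type*) [Group G] [TopologicalSpace G] [IsTopologicalGroup G]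
    (f : G → 𝕂) (hf : Continuous f)
    (D : ℝ) (hD : ∀ x y : G, ‖f (x * y) - f x - f y‖ ≤ D) :
    ∃ h : G → 𝕂, Continuous h ∧ (∀ x y : G, h (x * y) = h x + h y) ∧
      ∃ C : ℝ, ∀ g : G, ‖f g - h g‖ ≤ C := by
  have hD0 : 0 ≤ D := (norm_nonneg _).trans (hD 1 1)
  -- Radius `D + 1` rather than `D`, which may be `0`: only balls of positive radius are open.
  have hD' : ∀ x y : G, ‖f (x * y) - f x - f y‖ ≤ D + 1 := fun x y => (hD x y).trans (by linarith)
  obtain ⟨π, hπ, hπ_close⟩ := exists_addMonoidHom_vanishing_on_closedBall hchar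
    (r := D + 1) (by linarith)
  have hmul := map_mul_comp_of_norm_map_mul_sub_le hD' hπ
  have hnear : ∀ᶠ y in 𝓝 (1 : G), π (f y) = 0 := by
    have hopen := (isOpen_closedBall (0 : 𝕂) (r := D + 1) (by linarith)).preimage hf
    refine mem_of_superset (hopen.mem_nhds ?_) fun y hy => hπ _ (mem_closedBall_zero_iff.1 hy)
    simpa using hD' 1 1
  exact ⟨fun g => π (f g), continuous_of_map_mul_of_eventually_eq_zero hmul hnear, hmul,
    D + 1, fun g => hπ_close (f g)⟩
end

section
/- Let 𝕂 be a field equipped with a non-Archimedean absolute value, let G be a compactly generated topological group (generated as a group by a compact subset), and let E be a normed 𝕂-vector space on which G acts by linear isometries. If f : G → E is continuous and sup_{g,h∈G} ‖g·f(h) − f(gh) + f(g)‖ < ∞, then f is bounded: sup_{g∈G} ‖f(g)‖ < ∞. -/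
/-! The defect `δ(g, h) = ρ g (f h) - f (g h) + f g` expresses `f (g h)` and `ρ g (f g⁻¹)` as
sums of three terms bounded by `C = max (sup_K ‖f‖, sup ‖δ‖)` (note `‖f 1‖ = ‖δ(1, 1)‖`), so
by the ultrametric inequality `{g | ‖f g‖ ≤ C}` is a subgroup; it contains the compact
generating set `K`, hence is all of `G`. -/

lemma IsUltrametricDist.norm_add_sub_le {E : Type*} [SeminormedAddCommGroup E]
    [IsUltrametricDist E] {a b c : E} {C : ℝ} (ha : ‖a‖ ≤ C) (hb : ‖b‖ ≤ C) (hc : ‖c‖ ≤ C) :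
    ‖a + b - c‖ ≤ C := by
  rw [sub_eq_add_neg]
  refine (norm_add_le_max _ _).trans (max_le ((norm_add_le_max _ _).trans (max_le ha hb)) ?_)
  rwa [norm_neg]

section Quasicocycle

variable {G E : Type*} [Group G] [SeminormedAddCommGroup E]
  {ρ : G → E → E} {f : G → E} {C : ℝ}

open IsUltrametricDist

lemma norm_quasicocycle_one_le (hρ : ∀ g v, ‖ρ g v‖ = ‖v‖)
    (hD : ∀ g h, ‖ρ g (f h) - f (g * h) + f g‖ ≤ C) : ‖f 1‖ ≤ C := by
  simpa [hρ] using hD 1 1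

lemma norm_quasicocycle_mul_le [IsUltrametricDist E] (hρ : ∀ g v, ‖ρ g v‖ = ‖v‖)
    (hD : ∀ g h, ‖ρ g (f h) - f (g * h) + f g‖ ≤ C) {x y : G} (hx : ‖f x‖ ≤ C)
    (hy : ‖f y‖ ≤ C) : ‖f (x * y)‖ ≤ C := by
  have hxy : f (x * y) = ρ x (f y) + f x - (ρ x (f y) - f (x * y) + f x) := by abel
  rw [hxy]
  exact norm_add_sub_le ((hρ x _).trans_le hy) hx (hD x y)

lemma norm_quasicocycle_inv_le [IsUltrametricDist E] (hρ : ∀ g v, ‖ρ g v‖ = ‖v‖)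
    (hD : ∀ g h, ‖ρ g (f h) - f (g * h) + f g‖ ≤ C) {x : G} (hx : ‖f x‖ ≤ C) :
    ‖f x⁻¹‖ ≤ C := by
  have hx' : ρ x (f x⁻¹) = (ρ x (f x⁻¹) - f (x * x⁻¹) + f x) + f 1 - f x := by
    rw [mul_inv_cancel]; abel
  rw [← hρ x, hx']
  exact norm_add_sub_le (hD x x⁻¹) (norm_quasicocycle_one_le hρ hD) hx

lemma norm_quasicocycle_le_of_mem_closure [IsUltrametricDist E] (hρ : ∀ g v, ‖ρ g v‖ = ‖v‖)
    (hD : ∀ g h, ‖ρ g (f h) - f (g * h) + f g‖ ≤ C) {K : Set G} (hK : ∀ x ∈ K, ‖f x‖ ≤ C)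
    {g : G} (hg : g ∈ Subgroup.closure K) : ‖f g‖ ≤ C := by
  induction hg using Subgroup.closure_induction with
  | mem x hx => exact hK x hx
  | one => exact norm_quasicocycle_one_le hρ hD
  | mul x y _ _ hx hy => exact norm_quasicocycle_mul_le hρ hD hx hy
  | inv x _ hx => exact norm_quasicocycle_inv_le hρ hD hx

end Quasicocycle

theorem quasicocycle_bounded_of_compactlyGenerated_general
    (𝕂 : Type*) [NormedField 𝕂]
    (G : Type*) [Group G] [TopologicalSpace G]
    (K : Set G) (hK : IsCompact K) (hgen : Subgroup.closure K = ⊤)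
    (E : Type*) [NormedAddCommGroup E] [NormedSpace 𝕂 E] [IsUltrametricDist E]
    (ρ : G →* (E ≃ₗᵢ[𝕂] E))
    (f : G → E) (hf : Continuous f)
    (D : ℝ) (hD : ∀ g h : G, ‖ρ g (f h) - f (g * h) + f g‖ ≤ D) :
    ∃ C : ℝ, ∀ g : G, ‖f g‖ ≤ C := by
  obtain ⟨M, hM⟩ := (hK.image hf.norm).bddAbove
  refine ⟨max M D, fun g => ?_⟩
  refine norm_quasicocycle_le_of_mem_closure (ρ := fun g => ρ g) (fun g => (ρ g).norm_map)
    (fun g h => (hD g h).trans (le_max_right M D)) (fun x hx => ?_) (hgen ▸ Subgroup.mem_top g)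
  exact le_max_of_le_left (hM ⟨x, hx, rfl⟩)

/-- Over a non-Archimedean valued field `𝕂`, every continuous
`1`-quasicocycle on a compactly generated topological group `G` with values in a normed
`𝕂[G]`-module (a normed `𝕂`-vector space on which `G` acts by linear isometries) is bounded. -/
theorem quasicocycle_bounded_of_compactlyGenerated
    (𝕂 : Type*) [NormedField 𝕂] [IsUltrametricDist 𝕂]
    (G : Type*) [Group G] [TopologicalSpace G] [IsTopologicalGroup G]
    (K : Set G) (hK : IsCompact K) (hgen : Subgroup.closure K = ⊤)
    (E : Type*) [NormedAddCommGroup E] [NormedSpace 𝕂 E] [IsUltrametricDist E]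
    (ρ : G →* (E ≃ₗᵢ[𝕂] E))
    (f : G → E) (hf : Continuous f)
    (D : ℝ) (hD : ∀ g h : G, ‖ρ g (f h) - f (g * h) + f g‖ ≤ D) :
    ∃ C : ℝ, ∀ g : G, ‖f g‖ ≤ C :=
  quasicocycle_bounded_of_compactlyGenerated_general 𝕂 G K hK hgen E ρ f hf D hD
end

section
/- Let p be a prime, G a topological group, and f : G → ℚ_p a continuous quasimorphism with defect D(f) = 1. Let π : ℚ_p → ℚ_p/ℤ_p denote the quotient homomorphism of additive groups. Then π∘f : G → ℚ_p/ℤ_p is a group homomorphism whose kernel U = f⁻¹(ℤ_p) is an open normal subgroup of G, and the following are equivalent: (1) f is unbounded; (2) π∘f is surjective; (3) π∘f induces a group isomorphism between G/U and ℚ_p/ℤ_p. -/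
/-- The ring of integers `ℤ_p`, viewed as an additive subgroup (the closed unit ball) of
`ℚ_p`. -/
def padicUnitBall (p : ℕ) [Fact p.Prime] : AddSubgroup ℚ_[p] where
  carrier := {x : ℚ_[p] | ‖x‖ ≤ 1}
  zero_mem' := by simp
  add_mem' := by
    intro a b ha hb
    exact le_trans (Padic.nonarchimedean a b) (max_le ha hb)
  neg_mem' := by
    intro a ha
    simpa using ha

/-- The quotient homomorphism `ℚ_p → ℚ_p/ℤ_p` onto the Prüfer `p`-group. -/
noncomputable def padicPrueferProj (p : ℕ) [Fact p.Prime] : ℚ_[p] →+ ℚ_[p] ⧸ padicUnitBall p :=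
  QuotientAddGroup.mk' (padicUnitBall p)

/-!
A defect of at most `1` says `f (x * y) - f x - f y ∈ ℤ_p`, so `π ∘ f` is a homomorphism whose
kernel `f⁻¹(ℤ_p)` is open, `ℤ_p` being a ball in an ultrametric space. If `‖f‖ ≤ C`, the image
misses `π q` whenever `‖q‖ > max C 1`. Conversely, if `‖x‖ ≤ ‖f g‖` then `x / f g ∈ ℤ_p` is within
`‖f g‖⁻¹` of an integer `k`, by density of `ℤ` in `ℤ_p`, so `π x = k • π (f g) = π (f (g ^ k))`.
-/

lemma Real.le_of_iSup_eq_of_ne_zero {ι : Sort*} {u : ι → ℝ} {c : ℝ} (h : ⨆ i, u i = c)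
    (hc : c ≠ 0) (i : ι) : u i ≤ c := by
  by_cases hb : BddAbove (Set.range u)
  · exact h ▸ le_ciSup hb i
  · rw [Real.iSup_of_not_bddAbove hb] at h
    exact absurd h.symm hc

lemma MonoidHom.surjective_iff_exists_quotientMulEquiv {G H : Type*} [Group G] [Group H]
    (φ : G →* H) (U : Subgroup G) [U.Normal] (hU : U = φ.ker) :
    Function.Surjective φ ↔ ∃ e : G ⧸ U ≃* H, ∀ g : G, e g = φ g := by
  refine ⟨fun hφ => ?_, fun ⟨e, he⟩ => ?_⟩
  · exact ⟨(QuotientGroup.quotientMulEquivOfEq hU).trans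
      (QuotientGroup.quotientKerEquivOfSurjective φ hφ), fun _ => rfl⟩
  · have : ⇑φ = e ∘ (↑) := funext fun g => (he g).symm
    rw [this]
    exact e.surjective.comp QuotientGroup.mk_surjective

lemma Padic.isOpen_setOf_norm_le_one (p : ℕ) [Fact p.Prime] : IsOpen {x : ℚ_[p] | ‖x‖ ≤ 1} := by
  simpa [Metric.closedBall, dist_eq_norm] using
    IsUltrametricDist.isOpen_closedBall (0 : ℚ_[p]) one_ne_zero

namespace padicPrueferProj

variable {p : ℕ} [Fact p.Prime]

lemma eq_iff (x y : ℚ_[p]) : padicPrueferProj p x = padicPrueferProj p y ↔ ‖x - y‖ ≤ 1 :=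
  QuotientAddGroup.eq_iff_sub_mem

lemma eq_zero_iff (x : ℚ_[p]) : padicPrueferProj p x = 0 ↔ ‖x‖ ≤ 1 := by
  simpa using eq_iff x 0

lemma norm_le_max_of_eq {x y : ℚ_[p]} (h : padicPrueferProj p x = padicPrueferProj p y) :
    ‖y‖ ≤ max ‖x‖ 1 := by
  have hxy : ‖y - x‖ ≤ 1 := (eq_iff y x).mp h.symm
  calc ‖y‖ = ‖x + (y - x)‖ := by rw [add_sub_cancel]
    _ ≤ max ‖x‖ ‖y - x‖ := Padic.nonarchimedean _ _
    _ ≤ max ‖x‖ 1 := max_le_max le_rfl hxy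

lemma exists_zsmul_eq_of_norm_le {x a : ℚ_[p]} (h : ‖x‖ ≤ ‖a‖) :
    ∃ k : ℤ, k • padicPrueferProj p a = padicPrueferProj p x := by
  rcases eq_or_ne a 0 with rfl | ha
  · exact ⟨0, by rw [norm_zero, norm_le_zero_iff] at h; simp [h]⟩
  have hna : 0 < ‖a‖ := norm_pos_iff.mpr ha
  let t : ℤ_[p] := ⟨x / a, by rw [norm_div]; exact div_le_one_of_le₀ h hna.le⟩
  obtain ⟨k, hk⟩ := PadicInt.denseRange_intCast.exists_dist_lt t (inv_pos.mpr hna)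
  refine ⟨k, ?_⟩
  rw [← map_zsmul, eq_iff, zsmul_eq_mul, ← neg_sub, norm_neg]
  have hk' : ‖x / a - k‖ < ‖a‖⁻¹ := by
    rwa [dist_eq_norm, PadicInt.norm_def, PadicInt.coe_sub, PadicInt.coe_intCast] at hk
  calc ‖x - k * a‖ = ‖a‖ * ‖x / a - k‖ := by
        rw [← norm_mul, mul_sub, mul_div_cancel₀ x ha, mul_comm]
    _ ≤ ‖a‖ * ‖a‖⁻¹ := by gcongr
    _ = 1 := mul_inv_cancel₀ hna.ne'

lemma not_bddAbove_norm_of_surjective {α : Type*} {f : α → ℚ_[p]}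
    (hf : Function.Surjective fun a => padicPrueferProj p (f a)) :
    ¬ ∃ C : ℝ, ∀ a, ‖f a‖ ≤ C := by
  rintro ⟨C, hC⟩
  obtain ⟨q, hq⟩ := NormedField.exists_lt_norm ℚ_[p] (max C 1)
  obtain ⟨a, ha⟩ := hf (padicPrueferProj p q)
  exact lt_irrefl _ (hq.trans_le ((norm_le_max_of_eq ha).trans (max_le_max_right 1 (hC a))))

end padicPrueferProj

section Quasimorphism

variable {p : ℕ} [Fact p.Prime] {G : Type*} [Group G] {f : G → ℚ_[p]}

lemma padicPrueferProj_map_mul_of_defect_le_one (hf : ∀ x y, ‖f (x * y) - f x - f y‖ ≤ 1)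
    (x y : G) :
    padicPrueferProj p (f (x * y)) = padicPrueferProj p (f x) + padicPrueferProj p (f y) := by
  rw [← map_add, padicPrueferProj.eq_iff, ← sub_sub]
  exact hf x y

noncomputable def prueferHomOfDefectLeOne (hf : ∀ x y, ‖f (x * y) - f x - f y‖ ≤ 1) :
    G →* Multiplicative (ℚ_[p] ⧸ padicUnitBall p) :=
  MonoidHom.mk' (fun g => .ofAdd (padicPrueferProj p (f g))) fun x y => by
    simp only [padicPrueferProj_map_mul_of_defect_le_one hf, ofAdd_add]

lemma coe_ker_prueferHomOfDefectLeOne (hf : ∀ x y, ‖f (x * y) - f x - f y‖ ≤ 1) :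
    ((prueferHomOfDefectLeOne hf).ker : Set G) = {g | ‖f g‖ ≤ 1} :=
  Set.ext fun g => (ofAdd_eq_one.trans (padicPrueferProj.eq_zero_iff (f g)) :)

lemma surjective_prueferHomOfDefectLeOne_iff (hf : ∀ x y, ‖f (x * y) - f x - f y‖ ≤ 1) :
    Function.Surjective (prueferHomOfDefectLeOne hf) ↔
      Function.Surjective fun g => padicPrueferProj p (f g) :=
  EquivLike.comp_surjective _ Multiplicative.ofAdd

lemma surjective_of_not_bddAbove_norm (hf : ∀ x y, ‖f (x * y) - f x - f y‖ ≤ 1)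
    (hunb : ¬ ∃ C : ℝ, ∀ g, ‖f g‖ ≤ C) :
    Function.Surjective fun g => padicPrueferProj p (f g) := by
  rintro ⟨x⟩
  push Not at hunb
  obtain ⟨g, hg⟩ := hunb ‖x‖
  obtain ⟨k, hk⟩ := padicPrueferProj.exists_zsmul_eq_of_norm_le hg.le
  refine ⟨g ^ k, ?_⟩
  calc padicPrueferProj p (f (g ^ k))
      = (prueferHomOfDefectLeOne hf (g ^ k)).toAdd := rfl
    _ = k • padicPrueferProj p (f g) := by rw [map_zpow, toAdd_zpow]; rfl
    _ = _ := hk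

end Quasimorphism

theorem quasimorphism_padic_classification_general (p : ℕ) [Fact p.Prime]
    (G : Type*) [Group G] [TopologicalSpace G]
    (f : G → ℚ_[p]) (hf : Continuous f)
    (hdef : (⨆ q : G × G, ‖f (q.1 * q.2) - f q.1 - f q.2‖) = 1) :
    (∀ x y : G, padicPrueferProj p (f (x * y)) =
      padicPrueferProj p (f x) + padicPrueferProj p (f y)) ∧
    (∃ U : Subgroup G, (U : Set G) = {g : G | ‖f g‖ ≤ 1} ∧ U.Normal ∧ IsOpen (U : Set G)) ∧
    ((¬ ∃ C : ℝ, ∀ g : G, ‖f g‖ ≤ C) ↔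
      Function.Surjective fun g : G => padicPrueferProj p (f g)) ∧
    ((Function.Surjective fun g : G => padicPrueferProj p (f g)) ↔
      ∀ (U : Subgroup G) [U.Normal], (U : Set G) = {g : G | ‖f g‖ ≤ 1} →
        ∃ e : (G ⧸ U) ≃* Multiplicative (ℚ_[p] ⧸ padicUnitBall p),
          ∀ g : G, e (QuotientGroup.mk g) = Multiplicative.ofAdd (padicPrueferProj p (f g))) := by
  have hdefect : ∀ x y, ‖f (x * y) - f x - f y‖ ≤ 1 := fun x y =>
    Real.le_of_iSup_eq_of_ne_zero hdef one_ne_zero (x, y)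
  set φ := prueferHomOfDefectLeOne hdefect
  have hker : (φ.ker : Set G) = {g | ‖f g‖ ≤ 1} := coe_ker_prueferHomOfDefectLeOne hdefect
  refine ⟨padicPrueferProj_map_mul_of_defect_le_one hdefect,
    ⟨φ.ker, hker, φ.normal_ker, hker ▸ (Padic.isOpen_setOf_norm_le_one p).preimage hf⟩,
    ⟨surjective_of_not_bddAbove_norm hdefect, padicPrueferProj.not_bddAbove_norm_of_surjective⟩,
    ?_⟩
  rw [← surjective_prueferHomOfDefectLeOne_iff hdefect]
  exact ⟨fun hφ U _ hU => (φ.surjective_iff_exists_quotientMulEquiv U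
      (SetLike.coe_injective (hU.trans hker.symm))).mp hφ,
    fun h => (φ.surjective_iff_exists_quotientMulEquiv φ.ker rfl).mpr (h φ.ker hker)⟩

/-- Let `f : G → ℚ_p` be a continuous quasimorphism of defect `D(f) = 1`.
Then `π ∘ f` is a homomorphism to `ℚ_p/ℤ_p`, its kernel `U = f⁻¹(ℤ_p)` is an open normal
subgroup, and the following are equivalent: `f` is unbounded; `π ∘ f` is surjective;
`π ∘ f` induces an isomorphism `G/U ≃ ℚ_p/ℤ_p`. -/
theorem quasimorphism_padic_classification (p : ℕ) [Fact p.Prime]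
    (G : Type*) [Group G] [TopologicalSpace G] [IsTopologicalGroup G]
    (f : G → ℚ_[p]) (hf : Continuous f)
    (hdef : (⨆ q : G × G, ‖f (q.1 * q.2) - f q.1 - f q.2‖) = 1) :
    (∀ x y : G, padicPrueferProj p (f (x * y)) =
      padicPrueferProj p (f x) + padicPrueferProj p (f y)) ∧
    (∃ U : Subgroup G, (U : Set G) = {g : G | ‖f g‖ ≤ 1} ∧ U.Normal ∧ IsOpen (U : Set G)) ∧
    ((¬ ∃ C : ℝ, ∀ g : G, ‖f g‖ ≤ C) ↔
      Function.Surjective fun g : G => padicPrueferProj p (f g)) ∧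
    ((Function.Surjective fun g : G => padicPrueferProj p (f g)) ↔
      ∀ (U : Subgroup G) [U.Normal], (U : Set G) = {g : G | ‖f g‖ ≤ 1} →
        ∃ e : (G ⧸ U) ≃* Multiplicative (ℚ_[p] ⧸ padicUnitBall p),
          ∀ g : G, e (QuotientGroup.mk g) = Multiplicative.ofAdd (padicPrueferProj p (f g))) :=
  quasimorphism_padic_classification_general p G f hf hdef
end
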